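/- arXiv:1804.04620 — 12 statements merged into one kernel-verified Lean document; each statement's English description precedes it below -/
import Mathlib

section
/- Let n ≥ 3 and let A, J be real n × 3 matrices whose rows a_μ, j_μ ∈ ℝ³ satisfy the constant SU(2) Yang–Mills system ∑_{μ=1}^n a_μ × (a_μ × a_ν) = j_ν for all ν = 1, …, n. Then there exist Q ∈ O(n) and P ∈ SO(3) such that QAP is diagonal (i.e. (QAP)_{νk} = 0 whenever ν ≠ k). Moreover, for all such Q and P the matrix QJP is also diagonal, and the diagonal entries a_k = (QAP)_{kk} and j_k = (QJP)_{kk}, k = 1, 2, 3, satisfy −a₁(a₂² + a₃²) = j₁, −a₂(a₁² + a₃²) = j₂, −a₃(a₁² + a₂²) = j₃. -/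
/-!
Writing the system as `J = ymCurrent A := A (AᵀA) - tr(AᵀA) A` (vector triple product), one sees
that `ymCurrent (Q A P) = Q (ymCurrent A) P` for orthogonal `Q`, `P`. A singular value
decomposition `Q A P` of `A` exists (diagonalise `AᵀA` by `P`; the columns of `A P` are then
orthogonal and extend, after normalisation, to an orthonormal basis giving the rows of `Q`), and a
sign flip of one column of `P` puts it in `SO(3)`. For a rectangular diagonal `B` the Gram matrix
`BᵀB` is `diag(b_k²)`, so `ymCurrent B` is diagonal with entries `b_k (b_k² - ∑ b_l²)`.
-/

open Matrix

section Current

variable {R : Type*} [CommRing R] {m n : Type*} [Fintype m] [Fintype n]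

def ymCurrent (A : Matrix m n R) : Matrix m n R := A * (Aᵀ * A) - trace (Aᵀ * A) • A

theorem sum_cross_cross_eq_ymCurrent (A : Matrix m (Fin 3) R) (ν : m) :
    ∑ μ, A μ ⨯₃ (A μ ⨯₃ A ν) = ymCurrent A ν := by
  ext k
  simp only [cross_cross_eq_smul_sub_smul', ymCurrent, Finset.sum_apply, Pi.sub_apply,
    Pi.smul_apply, smul_eq_mul, Finset.sum_sub_distrib, Matrix.sub_apply, Matrix.smul_apply,
    mul_apply, transpose_apply, trace, diag, dotProduct, Finset.sum_mul, Finset.mul_sum]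
  congr 1
  · rw [Finset.sum_comm]
    exact Finset.sum_congr rfl fun μ _ => Finset.sum_congr rfl fun i _ => by ring
  · rw [Finset.sum_comm]

variable [DecidableEq m]

theorem transpose_mul_self_orthogonal_mul_mul {Q : Matrix m m R} (hQ : Q ∈ orthogonalGroup m R)
    (A : Matrix m n R) (P : Matrix n n R) :
    (Q * A * P)ᵀ * (Q * A * P) = Pᵀ * (Aᵀ * A) * P := by
  calc (Q * A * P)ᵀ * (Q * A * P) = Pᵀ * Aᵀ * (Qᵀ * Q) * A * P := by
        simp only [transpose_mul, Matrix.mul_assoc]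
    _ = Pᵀ * (Aᵀ * A) * P := by
        rw [(mem_orthogonalGroup_iff' m R).1 hQ, Matrix.mul_one, Matrix.mul_assoc Pᵀ]

theorem ymCurrent_orthogonal_mul_mul [DecidableEq n] {Q : Matrix m m R} {P : Matrix n n R}
    (hQ : Q ∈ orthogonalGroup m R) (hP : P ∈ orthogonalGroup n R) (A : Matrix m n R) :
    ymCurrent (Q * A * P) = Q * ymCurrent A * P := by
  have hPPt : P * Pᵀ = 1 := (mem_orthogonalGroup_iff n R).1 hP
  have hcube : Q * A * P * (Pᵀ * (Aᵀ * A) * P) = Q * (A * (Aᵀ * A)) * P := by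
    calc Q * A * P * (Pᵀ * (Aᵀ * A) * P) = Q * A * (P * Pᵀ) * (Aᵀ * A) * P := by
          simp only [Matrix.mul_assoc]
      _ = Q * (A * (Aᵀ * A)) * P := by rw [hPPt, Matrix.mul_one, Matrix.mul_assoc Q]
  have htrace : trace (Pᵀ * (Aᵀ * A) * P) = trace (Aᵀ * A) := by
    rw [trace_mul_cycle, hPPt, Matrix.one_mul]
  rw [ymCurrent, ymCurrent, transpose_mul_self_orthogonal_mul_mul hQ, hcube, htrace,
    Matrix.mul_sub, Matrix.sub_mul, Matrix.mul_smul, Matrix.smul_mul]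

end Current

section RectDiagonal

variable {R : Type*} [CommRing R] {p q : ℕ}

def IsRectDiagonal (B : Matrix (Fin p) (Fin q) R) : Prop :=
  ∀ (i : Fin p) (j : Fin q), (i : ℕ) ≠ j → B i j = 0

def rectDiag (hqp : q ≤ p) (B : Matrix (Fin p) (Fin q) R) (j : Fin q) : R :=
  B (Fin.castLE hqp j) j

namespace IsRectDiagonal

variable {B : Matrix (Fin p) (Fin q) R}

theorem mul_diagonal (hB : IsRectDiagonal B) (d : Fin q → R) :
    IsRectDiagonal (B * diagonal d) := fun i j hij => by
  rw [Matrix.mul_diagonal, hB i j hij, zero_mul]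

theorem transpose_mul_self (hB : IsRectDiagonal B) (hqp : q ≤ p) :
    Bᵀ * B = diagonal fun j => rectDiag hqp B j ^ 2 := by
  ext j j'
  rw [mul_apply, Finset.sum_eq_single (Fin.castLE hqp j)]
  · rcases eq_or_ne j j' with rfl | hjj'
    · simp [rectDiag, sq]
    · rw [diagonal_apply_ne _ hjj', transpose_apply,
        hB (Fin.castLE hqp j) j' (by simpa [Fin.val_ne_iff] using hjj'), mul_zero]
  · intro i _ hi
    rw [transpose_apply, hB i j fun h => hi (Fin.ext h), zero_mul]
  · simp

theorem ymCurrent_apply (hB : IsRectDiagonal B) (hqp : q ≤ p) (i : Fin p) (j : Fin q) :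
    ymCurrent B i j = B i j * (rectDiag hqp B j ^ 2 - ∑ l, rectDiag hqp B l ^ 2) := by
  rw [ymCurrent, hB.transpose_mul_self hqp, trace_diagonal, Matrix.sub_apply,
    Matrix.mul_diagonal, Matrix.smul_apply, smul_eq_mul]
  ring

theorem ymCurrent (hB : IsRectDiagonal B) (hqp : q ≤ p) : IsRectDiagonal (ymCurrent B) :=
  fun i j hij => by rw [hB.ymCurrent_apply hqp, hB i j hij, zero_mul]

end IsRectDiagonal

end RectDiagonal

section SingularValueDecomposition

theorem exists_orthonormalBasis_eq_norm_smul {𝕜 E ι κ : Type*} [RCLike 𝕜]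
    [NormedAddCommGroup E] [InnerProductSpace 𝕜 E] [FiniteDimensional 𝕜 E] [Fintype ι]
    {w : κ → E} (hw : Pairwise fun j j' => inner 𝕜 (w j) (w j') = 0) {e : κ → ι}
    (he : e.Injective) (hcard : Module.finrank 𝕜 E = Fintype.card ι) :
    ∃ b : OrthonormalBasis ι 𝕜 E, ∀ j, w j = (‖w j‖ : 𝕜) • b (e j) := by
  set v : ι → E := Function.extend e (fun j => (‖w j‖⁻¹ : 𝕜) • w j) 0 with hv_def
  have hv : Orthonormal 𝕜 ((e '' {j | w j ≠ 0}).domRestrict v) := by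
    constructor
    · rintro ⟨_, j, hj, rfl⟩
      simp [hv_def, he.extend_apply, norm_smul, norm_ne_zero_iff.2 hj]
    · intro i i' hne
      obtain ⟨j, -, hj⟩ := i.2
      obtain ⟨j', -, hj'⟩ := i'.2
      have hjj' : j ≠ j' := by rintro rfl; exact hne (Subtype.ext (hj.symm.trans hj'))
      simp [← hj, ← hj', hv_def, he.extend_apply, inner_smul_left, inner_smul_right, hw hjj']
  obtain ⟨b, hb⟩ := hv.exists_orthonormalBasis_extension_of_card_eq hcard
  refine ⟨b, fun j => ?_⟩
  by_cases hj : w j = 0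
  · simp [hj]
  · rw [hb (e j) ⟨j, hj, rfl⟩, hv_def, he.extend_apply, smul_smul,
      mul_inv_cancel₀ (by simpa using hj), one_smul]

theorem exists_orthogonal_isRectDiagonal_mul {p q : ℕ} (hqp : q ≤ p)
    (M : Matrix (Fin p) (Fin q) ℝ) (hM : (Mᵀ * M).IsDiag) :
    ∃ Q ∈ orthogonalGroup (Fin p) ℝ, IsRectDiagonal (Q * M) := by
  let col (j : Fin q) : EuclideanSpace ℝ (Fin p) := WithLp.toLp 2 (Mᵀ j)
  have hcol : Pairwise fun j j' => inner ℝ (col j) (col j') = 0 := fun j j' hjj' => by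
    rw [← hM hjj'.symm]
    simp only [col, PiLp.inner_apply, mul_apply, transpose_apply, RCLike.inner_apply,
      conj_trivial]
  obtain ⟨b, hb⟩ := exists_orthonormalBasis_eq_norm_smul hcol (Fin.castLE_injective hqp)
    (by simp)
  set Q := b.toBasis.toMatrix (EuclideanSpace.basisFun (Fin p) ℝ)
  have hQM (i : Fin p) (j : Fin q) : (Q * M) i j = inner ℝ (b i) (col j) := by
    simp [Q, col, mul_apply, Module.Basis.toMatrix_apply, OrthonormalBasis.repr_apply_apply,
      PiLp.inner_apply, mul_comm]
  refine ⟨Q, b.toMatrix_orthonormalBasis_mem_orthogonal _, fun i j hij => ?_⟩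
  rw [hQM, hb j, real_inner_smul_right, b.orthonormal.2 fun h => hij (by simp [h]), mul_zero]

theorem exists_orthogonal_isDiag_transpose_mul_self {m n : Type*} [Fintype m] [Fintype n]
    [DecidableEq n] (A : Matrix m n ℝ) :
    ∃ P ∈ orthogonalGroup n ℝ, ((A * P)ᵀ * (A * P)).IsDiag := by
  have hS : (Aᵀ * A).IsHermitian := by
    simpa using isHermitian_conjTranspose_mul_self A
  refine ⟨hS.eigenvectorUnitary, hS.eigenvectorUnitary.2, ?_⟩
  have hdiag := hS.conjStarAlgAut_star_eigenvectorUnitary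
  rw [Unitary.conjStarAlgAut_apply, Unitary.coe_star, star_star, star_eq_conjTranspose,
    conjTranspose_eq_transpose_of_trivial] at hdiag
  rw [transpose_mul, Matrix.mul_assoc, ← Matrix.mul_assoc Aᵀ, ← Matrix.mul_assoc, hdiag]
  exact isDiag_diagonal _

theorem mul_diagonal_update_det_mem_specialOrthogonalGroup {R n : Type*} [CommRing R]
    [Fintype n] [DecidableEq n] {P : Matrix n n R} (hP : P ∈ orthogonalGroup n R) (i : n) :
    P * diagonal (Function.update 1 i P.det) ∈ specialOrthogonalGroup n R := by
  have hdet : P.det * P.det = 1 := by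
    simpa using congrArg det ((mem_orthogonalGroup_iff n R).1 hP)
  have hD : diagonal (Function.update 1 i P.det) ∈ orthogonalGroup n R := by
    rw [mem_orthogonalGroup_iff, diagonal_transpose, diagonal_mul_diagonal, ← diagonal_one]
    congr 1
    ext j
    rcases eq_or_ne j i with rfl | hj <;> simp [*]
  refine mem_specialOrthogonalGroup_iff.2 ⟨mul_mem hP hD, ?_⟩
  rw [det_mul, det_diagonal, Finset.prod_update_of_mem (Finset.mem_univ i)]
  simpa using hdet

theorem exists_orthogonal_specialOrthogonal_isRectDiagonal {p q : ℕ} [NeZero q] (hqp : q ≤ p)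
    (A : Matrix (Fin p) (Fin q) ℝ) :
    ∃ Q ∈ orthogonalGroup (Fin p) ℝ, ∃ P ∈ specialOrthogonalGroup (Fin q) ℝ,
      IsRectDiagonal (Q * A * P) := by
  obtain ⟨P, hP, hAP⟩ := exists_orthogonal_isDiag_transpose_mul_self A
  obtain ⟨Q, hQ, hQAP⟩ := exists_orthogonal_isRectDiagonal_mul hqp (A * P) hAP
  refine ⟨Q, hQ, _, mul_diagonal_update_det_mem_specialOrthogonalGroup hP 0, ?_⟩
  rw [← Matrix.mul_assoc, Matrix.mul_assoc Q A P]
  exact hQAP.mul_diagonal _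

end SingularValueDecomposition

/-- Theorem 2 of the paper (case `n ≥ 3`): if `A, J` satisfy the constant SU(2)
Yang–Mills system, then there exist `Q ∈ O(n)` and `P ∈ SO(3)` such that `Q*A*P`
is diagonal; and for all such `Q, P`, the matrix `Q*J*P` is also diagonal and
the diagonal entries satisfy `-a₁(a₂²+a₃²) = j₁`, `-a₂(a₁²+a₃²) = j₂`,
`-a₃(a₁²+a₂²) = j₃`. -/
theorem su2_ym_diagonalization (n : ℕ) (hn : 3 ≤ n)
    (A J : Matrix (Fin n) (Fin 3) ℝ)
    (hYM : ∀ ν : Fin n,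
      ∑ μ : Fin n, crossProduct (A μ) (crossProduct (A μ) (A ν)) = J ν) :
    (∃ Q ∈ Matrix.orthogonalGroup (Fin n) ℝ,
      ∃ P ∈ Matrix.specialOrthogonalGroup (Fin 3) ℝ,
        ∀ (ν : Fin n) (k : Fin 3), (ν : ℕ) ≠ (k : ℕ) → (Q * A * P) ν k = 0) ∧
    (∀ Q ∈ Matrix.orthogonalGroup (Fin n) ℝ,
      ∀ P ∈ Matrix.specialOrthogonalGroup (Fin 3) ℝ,
        (∀ (ν : Fin n) (k : Fin 3), (ν : ℕ) ≠ (k : ℕ) → (Q * A * P) ν k = 0) →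
        (∀ (ν : Fin n) (k : Fin 3), (ν : ℕ) ≠ (k : ℕ) → (Q * J * P) ν k = 0) ∧
        (∀ a j : Fin 3 → ℝ,
          (∀ k : Fin 3, a k = (Q * A * P) (Fin.castLE hn k) k) →
          (∀ k : Fin 3, j k = (Q * J * P) (Fin.castLE hn k) k) →
          -a 0 * (a 1 ^ 2 + a 2 ^ 2) = j 0 ∧
          -a 1 * (a 0 ^ 2 + a 2 ^ 2) = j 1 ∧
          -a 2 * (a 0 ^ 2 + a 1 ^ 2) = j 2)) := by
  have hJ : J = ymCurrent A := funext fun ν => by rw [← hYM ν, sum_cross_cross_eq_ymCurrent]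
  refine ⟨exists_orthogonal_specialOrthogonal_isRectDiagonal hn A,
    fun Q hQ P hP (hB : IsRectDiagonal (Q * A * P)) => ?_⟩
  have hQJP : Q * J * P = ymCurrent (Q * A * P) := by
    rw [hJ, ymCurrent_orthogonal_mul_mul hQ (mem_specialOrthogonalGroup_iff.1 hP).1]
  refine ⟨hQJP ▸ hB.ymCurrent hn, fun a j ha hj => ?_⟩
  have ha' : a = rectDiag hn (Q * A * P) := funext ha
  have hj' (k : Fin 3) : j k = a k * (a k ^ 2 - ∑ l, a l ^ 2) := by
    rw [hj, hQJP, hB.ymCurrent_apply hn, ha']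
    rfl
  simp only [hj', Fin.sum_univ_three]
  exact ⟨by ring, by ring, by ring⟩
end

section
/- Suppose (b₁, b₂, b₃) with b₁ ≠ 0, b₂ ≠ 0, b₃ ≠ 0 is a solution of the system b₁(b₂² + b₃²) = j₁, b₂(b₁² + b₃²) = j₂, b₃(b₁² + b₂²) = j₃ for real parameters j₁, j₂, j₃. Let K be the real number with K ≥ 0 and K³ = (b₁b₂b₃)². Then (K/b₁, K/b₂, K/b₃) is also a solution of the same system. -/
/-- Lemma 4 of the paper (the symmetry of the diagonal system): if
`(b₁, b₂, b₃)` with all entries nonzero solves the diagonal system with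
parameters `(j₁, j₂, j₃)` and `K ≥ 0` satisfies `K³ = (b₁b₂b₃)²`, then
`(K/b₁, K/b₂, K/b₃)` is also a solution of the same system. -/
theorem diagonal_system_symmetry (j₁ j₂ j₃ b₁ b₂ b₃ K : ℝ)
    (hb₁ : b₁ ≠ 0) (hb₂ : b₂ ≠ 0) (hb₃ : b₃ ≠ 0)
    (h₁ : b₁ * (b₂ ^ 2 + b₃ ^ 2) = j₁)
    (h₂ : b₂ * (b₁ ^ 2 + b₃ ^ 2) = j₂)
    (h₃ : b₃ * (b₁ ^ 2 + b₂ ^ 2) = j₃)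
    (hK : 0 ≤ K) (hK3 : K ^ 3 = (b₁ * b₂ * b₃) ^ 2) :
    (K / b₁) * ((K / b₂) ^ 2 + (K / b₃) ^ 2) = j₁ ∧
    (K / b₂) * ((K / b₁) ^ 2 + (K / b₃) ^ 2) = j₂ ∧
    (K / b₃) * ((K / b₁) ^ 2 + (K / b₂) ^ 2) = j₃ := by
  refine ⟨?_, ?_, ?_⟩ <;> field_simp <;> subst h₁ h₂ h₃ <;> nlinarith [hK3, sq_nonneg b₁, sq_nonneg b₂, sq_nonneg b₃]
end

section
/- Let j₁, j₂ be nonzero real numbers. Then the system b₁(b₂² + b₃²) = j₁, b₂(b₁² + b₃²) = j₂, b₃(b₁² + b₂²) = 0 has exactly one real solution (b₁, b₂, b₃), and this solution satisfies b₃ = 0, b₁³ = j₂²/j₁ and b₂³ = j₁²/j₂. -/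
private lemma cube_inj : Function.Injective (fun a : ℝ => a ^ 3) :=
  (Odd.strictMono_pow (⟨1, by norm_num⟩)).injective

private lemma cube_surj (x : ℝ) : ∃ a : ℝ, a ^ 3 = x := by
  refine ⟨|x| ^ ((1:ℝ)/3) * Real.sign x, ?_⟩
  have h1 : (|x| ^ ((1:ℝ)/3)) ^ 3 = |x| := by
    rw [← Real.rpow_natCast (|x| ^ ((1:ℝ)/3)) 3, ← Real.rpow_mul (abs_nonneg x)]
    norm_num
  have h2 : Real.sign x ^ 3 = Real.sign x := by
    rcases Real.sign_apply_eq x with h | h | h <;> rw [h] <;> norm_num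
  rw [mul_pow, h1, h2]
  rcases lt_trichotomy x 0 with h | h | h
  · rw [Real.sign_of_neg h, abs_of_neg h]; ring
  · simp [h]
  · rw [Real.sign_of_pos h, abs_of_pos h]; ring

private lemma key (j₁ j₂ : ℝ) (h₁ : j₁ ≠ 0) (h₂ : j₂ ≠ 0)
    (b₁ b₂ b₃ : ℝ)
    (e₁ : b₁ * (b₂ ^ 2 + b₃ ^ 2) = j₁)
    (e₂ : b₂ * (b₁ ^ 2 + b₃ ^ 2) = j₂)
    (e₃ : b₃ * (b₁ ^ 2 + b₂ ^ 2) = 0) :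
    b₃ = 0 ∧ b₁ ^ 3 = j₂ ^ 2 / j₁ ∧ b₂ ^ 3 = j₁ ^ 2 / j₂ := by
  have hb₁ : b₁ ≠ 0 := by rintro rfl; simp at e₁; exact h₁ e₁.symm
  have hb₂ : b₂ ≠ 0 := by rintro rfl; simp at e₂; exact h₂ e₂.symm
  have hpos : b₁ ^ 2 + b₂ ^ 2 > 0 := by positivity
  have hb₃ : b₃ = 0 := by
    rcases mul_eq_zero.mp e₃ with h | h
    · exact h
    · exact absurd h hpos.ne'
  subst hb₃
  simp only [ne_eq, OfNat.ofNat_ne_zero, not_false_eq_true, zero_pow, add_zero] at e₁ e₂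
  refine ⟨rfl, ?_, ?_⟩
  · field_simp
    rw [← e₁, ← e₂]; ring
  · field_simp
    rw [← e₁, ← e₂]; ring

/-- Case 3 of Lemma 5 of the paper: for nonzero `j₁, j₂` and `j₃ = 0`, the
diagonal system has exactly one real solution `(b₁, b₂, b₃)`, and it satisfies
`b₃ = 0`, `b₁³ = j₂²/j₁` and `b₂³ = j₁²/j₂`. -/
theorem diagonal_system_rank_two_unique_solution (j₁ j₂ : ℝ)
    (h₁ : j₁ ≠ 0) (h₂ : j₂ ≠ 0) :
    (∃! p : ℝ × ℝ × ℝ,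
      p.1 * (p.2.1 ^ 2 + p.2.2 ^ 2) = j₁ ∧
      p.2.1 * (p.1 ^ 2 + p.2.2 ^ 2) = j₂ ∧
      p.2.2 * (p.1 ^ 2 + p.2.1 ^ 2) = 0) ∧
    (∀ b₁ b₂ b₃ : ℝ,
      b₁ * (b₂ ^ 2 + b₃ ^ 2) = j₁ →
      b₂ * (b₁ ^ 2 + b₃ ^ 2) = j₂ →
      b₃ * (b₁ ^ 2 + b₂ ^ 2) = 0 →
      b₃ = 0 ∧ b₁ ^ 3 = j₂ ^ 2 / j₁ ∧ b₂ ^ 3 = j₁ ^ 2 / j₂) := by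
  obtain ⟨a, ha⟩ := cube_surj (j₂ ^ 2 / j₁)
  obtain ⟨b, hb⟩ := cube_surj (j₁ ^ 2 / j₂)
  have hab2 : a * b ^ 2 = j₁ := by
    apply cube_inj
    show (a * b ^ 2) ^ 3 = j₁ ^ 3
    have : (a * b ^ 2) ^ 3 = a ^ 3 * (b ^ 3) ^ 2 := by ring
    rw [this, ha, hb]
    field_simp
  have hba2 : b * a ^ 2 = j₂ := by
    apply cube_inj
    show (b * a ^ 2) ^ 3 = j₂ ^ 3
    have : (b * a ^ 2) ^ 3 = b ^ 3 * (a ^ 3) ^ 2 := by ring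
    rw [this, hb, ha]
    field_simp
  constructor
  · refine ⟨(a, b, 0), ⟨by simpa using hab2, by simpa using hba2, by simp⟩, ?_⟩
    rintro ⟨c₁, c₂, c₃⟩ ⟨f₁, f₂, f₃⟩
    obtain ⟨hc₃, hc₁, hc₂⟩ := key j₁ j₂ h₁ h₂ c₁ c₂ c₃ f₁ f₂ f₃
    have : c₁ = a := cube_inj (by simp only []; rw [hc₁, ha])
    have : c₂ = b := cube_inj (by simp only []; rw [hc₂, hb])
    simp_all
  · exact fun b₁ b₂ b₃ e₁ e₂ e₃ => key j₁ j₂ h₁ h₂ b₁ b₂ b₃ e₁ e₂ e₃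
end

section
/- Let j be a nonzero real number. Then the system b₁(b₂² + b₃²) = j, b₂(b₁² + b₃²) = j, b₃(b₁² + b₂²) = j has exactly one real solution (b₁, b₂, b₃), and this solution satisfies b₁ = b₂ = b₃ and b₁³ = j/2. -/
/-- Every real number has a real cube root. -/
lemma exists_cube_root (x : ℝ) : ∃ b : ℝ, b ^ 3 = x := by
  rcases le_or_gt 0 x with hx | hx
  · exact ⟨x ^ ((1:ℝ)/3), by
      rw [← Real.rpow_natCast (x ^ ((1:ℝ)/3)) 3, ← Real.rpow_mul hx]
      norm_num⟩
  · obtain ⟨b, hb⟩ : ∃ b : ℝ, b ^ 3 = -x := by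
      refine ⟨(-x) ^ ((1:ℝ)/3), ?_⟩
      rw [← Real.rpow_natCast ((-x) ^ ((1:ℝ)/3)) 3, ← Real.rpow_mul (by linarith)]
      norm_num
    exact ⟨-b, by rw [neg_pow]; rw [hb]; ring⟩

/-- Key algebraic fact: symmetric solutions must be equal. -/
lemma all_eq (j : ℝ) (hj : j ≠ 0) (b₁ b₂ b₃ : ℝ)
    (h1 : b₁ * (b₂ ^ 2 + b₃ ^ 2) = j)
    (h2 : b₂ * (b₁ ^ 2 + b₃ ^ 2) = j)
    (h3 : b₃ * (b₁ ^ 2 + b₂ ^ 2) = j) :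
    b₁ = b₂ ∧ b₂ = b₃ ∧ b₁ ^ 3 = j / 2 := by
  have e12 : (b₁ - b₂) * (b₃ ^ 2 - b₁ * b₂) = 0 := by nlinarith [h1, h2]
  have e23 : (b₂ - b₃) * (b₁ ^ 2 - b₂ * b₃) = 0 := by nlinarith [h2, h3]
  have e13 : (b₁ - b₃) * (b₂ ^ 2 - b₁ * b₃) = 0 := by nlinarith [h1, h3]
  have heq : b₁ = b₂ ∧ b₂ = b₃ := by
    rcases mul_eq_zero.1 e12 with h12 | h12
    · have h12 : b₁ = b₂ := by linarith
      rcases mul_eq_zero.1 e23 with h23 | h23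
      · exact ⟨h12, by linarith⟩
      · -- b₁ = b₂ and b₁² = b₂ b₃, so b₁(b₁ - b₃) = 0
        have key : b₁ * (b₁ - b₃) = 0 := by linear_combination h23 - b₃ * h12
        rcases mul_eq_zero.1 key with h | h
        · exfalso; apply hj; rw [← h3]; rw [h] at h12 ⊢; rw [← h12]; ring
        · exact ⟨h12, by linarith [h12]⟩
    · -- b₃² = b₁ b₂
      rcases mul_eq_zero.1 e23 with h23 | h23
      · -- b₂ = b₃, so b₂² = b₁b₂, b₂(b₂ - b₁) = 0
        have h23 : b₂ = b₃ := by linarith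
        have key : b₂ * (b₂ - b₁) = 0 := by
          linear_combination h12 + (b₂ + b₃) * h23
        rcases mul_eq_zero.1 key with h | h
        · exfalso; apply hj; rw [← h1, h, ← h23, h]; ring
        · exact ⟨by linarith, h23⟩
      · -- b₃² = b₁b₂ and b₁² = b₂b₃
        rcases mul_eq_zero.1 e13 with h13 | h13
        · -- b₁ = b₃, so b₁² = b₂b₁, b₁(b₁ - b₂) = 0
          have h13 : b₁ = b₃ := by linarith
          have key : b₁ * (b₁ - b₂) = 0 := by linear_combination h23 - b₂ * h13
          rcases mul_eq_zero.1 key with h | h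
          · exfalso; apply hj; rw [← h2, h, ← h13, h]; ring
          · have hb12 : b₁ = b₂ := by linarith
            exact ⟨hb12, by rw [← hb12]; exact h13⟩
        · constructor <;>
            nlinarith [sq_nonneg (b₁ - b₂), sq_nonneg (b₂ - b₃), sq_nonneg (b₁ - b₃)]
  obtain ⟨h12, h23⟩ := heq
  refine ⟨h12, h23, ?_⟩
  subst h12; subst h23
  nlinarith [h1]

/-- Case 4 of Lemma 5 of the paper: for equal nonzero parameters
`j₁ = j₂ = j₃ = j ≠ 0`, the diagonal system has exactly one real solution
`(b₁, b₂, b₃)`, and it satisfies `b₁ = b₂ = b₃` and `b₁³ = j/2`. -/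
theorem diagonal_system_equal_current_unique_solution (j : ℝ) (hj : j ≠ 0) :
    (∃! p : ℝ × ℝ × ℝ,
      p.1 * (p.2.1 ^ 2 + p.2.2 ^ 2) = j ∧
      p.2.1 * (p.1 ^ 2 + p.2.2 ^ 2) = j ∧
      p.2.2 * (p.1 ^ 2 + p.2.1 ^ 2) = j) ∧
    (∀ b₁ b₂ b₃ : ℝ,
      b₁ * (b₂ ^ 2 + b₃ ^ 2) = j →
      b₂ * (b₁ ^ 2 + b₃ ^ 2) = j →
      b₃ * (b₁ ^ 2 + b₂ ^ 2) = j →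
      b₁ = b₂ ∧ b₂ = b₃ ∧ b₁ ^ 3 = j / 2) := by
  obtain ⟨b, hb⟩ := exists_cube_root (j / 2)
  have hinj : Function.Injective (fun a : ℝ => a ^ 3) :=
    (Odd.strictMono_pow (⟨1, by norm_num⟩ : Odd 3)).injective
  constructor
  · refine ⟨(b, b, b), ⟨?_, ?_, ?_⟩, ?_⟩
    · simp only; nlinarith [hb]
    · simp only; nlinarith [hb]
    · simp only; nlinarith [hb]
    · rintro ⟨c₁, c₂, c₃⟩ ⟨g1, g2, g3⟩
      obtain ⟨e1, e2, e3⟩ := all_eq j hj c₁ c₂ c₃ g1 g2 g3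
      have hc : c₁ = b := hinj (by simp only; rw [e3, hb])
      simp only [Prod.mk.injEq]
      exact ⟨hc, by rw [← e1]; exact hc, by rw [← e2, ← e1]; exact hc⟩
  · exact fun b₁ b₂ b₃ h1 h2 h3 => all_eq j hj b₁ b₂ b₃ h1 h2 h3
end

section
/- Let j₁, j₃ be real numbers with j₁ > j₃ > 0, and set z₊ = (j₁ + √(j₁² − j₃²))/j₃ and z₋ = (j₁ − √(j₁² − j₃²))/j₃. Then the system b₁(b₂² + b₃²) = j₁, b₂(b₁² + b₃²) = j₁, b₃(b₁² + b₂²) = j₃ has exactly two real solutions, namely (b₁±, b₂±, b₃±) with b₁± = b₂± = (j₃/(2z±))^{1/3} and b₃± = z± b₁±, for the two choices of sign. Moreover z₊ z₋ = 1. -/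
/-- Cube of the real cube root (for nonnegative reals). -/
lemma cube_rt_cube {x : ℝ} (hx : 0 ≤ x) : (x ^ ((1:ℝ)/3)) ^ 3 = x := by
  rw [← Real.rpow_natCast (x ^ ((1:ℝ)/3)) 3, ← Real.rpow_mul hx]
  norm_num

/-- Cube root of a cube (for nonnegative reals). -/
lemma cube_rt_of_cube {b : ℝ} (hb : 0 ≤ b) : ((b ^ 3 : ℝ)) ^ ((1:ℝ)/3) = b := by
  rw [← Real.rpow_natCast b 3, ← Real.rpow_mul hb]
  norm_num

set_option maxHeartbeats 1600000 in
/-- Case (5)-(a) of Lemma 5 of the paper: for `j₁ = j₂ > j₃ > 0`, the diagonal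
system has exactly two real solutions `(b₁±, b₂±, b₃±)` with
`b₁± = b₂± = (j₃/(2z±))^{1/3}`, `b₃± = z± b₁±`, where
`z± = (j₁ ± √(j₁² − j₃²))/j₃`; moreover `z₊ z₋ = 1`. -/
theorem diagonal_system_two_solutions_case_a (j₁ j₃ : ℝ)
    (h₁₃ : j₁ > j₃) (h₃ : j₃ > 0)
    (zp zm b1p b1m : ℝ)
    (hzp : zp = (j₁ + Real.sqrt (j₁ ^ 2 - j₃ ^ 2)) / j₃)
    (hzm : zm = (j₁ - Real.sqrt (j₁ ^ 2 - j₃ ^ 2)) / j₃)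
    (hb1p : b1p = (j₃ / (2 * zp)) ^ ((1 : ℝ) / 3))
    (hb1m : b1m = (j₃ / (2 * zm)) ^ ((1 : ℝ) / 3)) :
    (∀ b₁ b₂ b₃ : ℝ,
      (b₁ * (b₂ ^ 2 + b₃ ^ 2) = j₁ ∧ b₂ * (b₁ ^ 2 + b₃ ^ 2) = j₁ ∧
        b₃ * (b₁ ^ 2 + b₂ ^ 2) = j₃) ↔
      ((b₁, b₂, b₃) = (b1p, b1p, zp * b1p) ∨
       (b₁, b₂, b₃) = (b1m, b1m, zm * b1m))) ∧
    (b1p, b1p, zp * b1p) ≠ (b1m, b1m, zm * b1m) ∧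
    zp * zm = 1 := by
  have hj₁ : 0 < j₁ := lt_trans h₃ h₁₃
  have hj₃ne : j₃ ≠ 0 := ne_of_gt h₃
  set s := Real.sqrt (j₁ ^ 2 - j₃ ^ 2) with hsdef
  have hs2 : s ^ 2 = j₁ ^ 2 - j₃ ^ 2 := Real.sq_sqrt (by nlinarith)
  have hspos : 0 < s := Real.sqrt_pos.mpr (by nlinarith)
  have hsj : s < j₁ := by nlinarith
  have hzppos : 0 < zp := by rw [hzp]; exact div_pos (by linarith) h₃
  have hzmpos : 0 < zm := by rw [hzm]; exact div_pos (by linarith) h₃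
  have hqp : j₃ * zp ^ 2 - 2 * j₁ * zp + j₃ = 0 := by
    rw [hzp]; field_simp; nlinarith [hs2]
  have hqm : j₃ * zm ^ 2 - 2 * j₁ * zm + j₃ = 0 := by
    rw [hzm]; field_simp; nlinarith [hs2]
  have hprod : zp * zm = 1 := by
    rw [hzp, hzm]; field_simp; nlinarith [hs2]
  have hsum : j₃ * (zp + zm) = 2 * j₁ := by
    rw [hzp, hzm]; field_simp; ring
  -- the forward construction: for z with the quadratic property, the claimed triple solves
  have solve : ∀ z b : ℝ, 0 < z → j₃ * z ^ 2 - 2 * j₁ * z + j₃ = 0 →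
      b = (j₃ / (2 * z)) ^ ((1:ℝ)/3) →
      (b * (b ^ 2 + (z*b) ^ 2) = j₁ ∧ b * (b ^ 2 + (z*b) ^ 2) = j₁ ∧
        (z*b) * (b ^ 2 + b ^ 2) = j₃) := by
    intro z b hz hq hb
    have hbase : (0:ℝ) < j₃ / (2 * z) := div_pos h₃ (by linarith)
    have hb3 : b ^ 3 = j₃ / (2 * z) := by rw [hb]; exact cube_rt_cube hbase.le
    have hb3' : 2 * z * b ^ 3 = j₃ := by
      rw [hb3]; field_simp
    have hzne : (2*z : ℝ) ≠ 0 := by positivity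
    have h1 : 2*z*(b * (b ^ 2 + (z*b) ^ 2)) = 2*z*j₁ := by
      linear_combination (1 + z^2) * hb3' + hq
    have h1' : b * (b ^ 2 + (z*b) ^ 2) = j₁ := by
      exact mul_left_cancel₀ hzne h1
    exact ⟨h1', h1', by linear_combination hb3'⟩
  refine ⟨?_, ?_, hprod⟩
  · intro b₁ b₂ b₃
    constructor
    · rintro ⟨e1, e2, e3⟩
      -- first show b₁ = b₂
      have key : (b₁ - b₂) * (b₃ ^ 2 - b₁ * b₂) = 0 := by linear_combination e1 - e2
      have hb12 : b₁ = b₂ := by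
        by_contra hne
        have hfac : b₃ ^ 2 = b₁ * b₂ := by
          rcases mul_eq_zero.mp key with h | h
          · exact absurd (by linarith) hne
          · linarith
        -- derive positivity and contradiction
        have hps : b₁ * b₂ * (b₁ + b₂) = j₁ := by linear_combination e1 - b₁ * hfac
        have hppos : 0 < b₁ * b₂ := by
          rcases lt_trichotomy (b₁ * b₂) 0 with h | h | h
          · linarith [sq_nonneg b₃, hfac]
          · exfalso; rw [h] at hps; simp at hps; linarith
          · exact h
        have hspos' : 0 < b₁ + b₂ := by
          rcases lt_trichotomy (b₁ + b₂) 0 with h | h | h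
          · nlinarith
          · exfalso; rw [h] at hps; simp at hps; linarith
          · exact h
        have hb1 : 0 < b₁ := by nlinarith
        have hb2 : 0 < b₂ := by nlinarith
        have hb3pos : 0 < b₃ := by nlinarith [sq_nonneg b₁, sq_nonneg b₂]
        have hu : 0 < (b₁ - b₂) ^ 2 := by
          have := sub_ne_zero.mpr hne
          positivity
        have hsq : (b₃ * (b₁ + b₂)) ^ 2 < (b₁ ^ 2 + b₂ ^ 2) ^ 2 := by
          nlinarith [mul_pos hppos hu, mul_pos hu hu, hfac]
        have hkey : b₃ * (b₁ + b₂) < b₁ ^ 2 + b₂ ^ 2 := by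
          nlinarith [hsq, mul_pos hb3pos hspos', sq_nonneg b₁, sq_nonneg b₂]
        -- then j₃ = b₃(b₁²+b₂²) > b₃²(b₁+b₂) = j₁, contradiction
        nlinarith [mul_lt_mul_of_pos_left hkey hb3pos, hps, hfac, e3]
      subst hb12
      -- now b₁ plays role of b, the repeated component
      have hbne : b₁ ≠ 0 := by
        intro h; rw [h] at e3; simp at e3; exact (ne_of_gt h₃) e3.symm
      have hbpos : 0 < b₁ := by nlinarith [sq_nonneg b₃, sq_nonneg b₁]
      have hb3pos : 0 < b₃ := by nlinarith [sq_nonneg b₁]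
      obtain ⟨z, hzb, hzpos⟩ : ∃ z : ℝ, b₃ = z * b₁ ∧ 0 < z :=
        ⟨b₃ / b₁, by field_simp, div_pos hb3pos hbpos⟩
      have he1 : b₁ ^ 3 * (1 + z ^ 2) = j₁ := by
        rw [hzb] at e1; linear_combination e1
      have he3 : 2 * b₁ ^ 3 * z = j₃ := by
        rw [hzb] at e3; linear_combination e3
      have hq : j₃ * z ^ 2 - 2 * j₁ * z + j₃ = 0 := by
        linear_combination 2*z*he1 - (z^2 + 1) * he3
      have hfac : j₃ * ((z - zp) * (z - zm)) = 0 := by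
        linear_combination hq - z * hsum + j₃ * hprod
      have hzz : z = zp ∨ z = zm := by
        rcases mul_eq_zero.mp hfac with h | h
        · exact absurd h hj₃ne
        · rcases mul_eq_zero.mp h with h | h
          · left; linarith
          · right; linarith
      have hb3eq : b₁ ^ 3 = j₃ / (2 * z) := by
        field_simp
        linear_combination he3
      have hbform : b₁ = (j₃ / (2 * z)) ^ ((1:ℝ)/3) := by
        rw [← hb3eq]; exact (cube_rt_of_cube hbpos.le).symm
      rcases hzz with h | h
      · left
        have hbb : b₁ = b1p := by rw [hb1p, ← h, hbform]
        rw [Prod.mk.injEq, Prod.mk.injEq]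
        exact ⟨hbb, hbb, by rw [hzb, h, hbb]⟩
      · right
        have hbb : b₁ = b1m := by rw [hb1m, ← h, hbform]
        rw [Prod.mk.injEq, Prod.mk.injEq]
        exact ⟨hbb, hbb, by rw [hzb, h, hbb]⟩
    · rintro (h | h) <;> rw [Prod.mk.injEq, Prod.mk.injEq] at h <;>
        obtain ⟨h1, h2, h3⟩ := h <;> rw [h1, h2, h3]
      · exact solve zp b1p hzppos hqp hb1p
      · exact solve zm b1m hzmpos hqm hb1m
  · -- distinctness
    have hzlt : zm < zp := by
      rw [hzp, hzm]
      exact (div_lt_div_iff_of_pos_right h₃).mpr (by linarith)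
    intro h
    rw [Prod.mk.injEq] at h
    have hb : b1p = b1m := h.1
    have hblt : b1p < b1m := by
      rw [hb1p, hb1m]
      apply Real.rpow_lt_rpow (le_of_lt (div_pos h₃ (by linarith)))
      · exact div_lt_div_of_pos_left h₃ (by linarith) (by linarith)
      · norm_num
    exact absurd hb (ne_of_lt hblt)
end

section
/- Let j₁, j₃ be real numbers with j₃ > j₁ > 0, and set s = (j₃ + √(j₃² + 8j₁²))/(2j₁). Then s > 2, and with w₊ = (s + √(s² − 4))/2, w₋ = (s − √(s² − 4))/2 and b₃ = (j₁/s)^{1/3}, the system b₁(b₂² + b₃²) = j₁, b₂(b₁² + b₃²) = j₁, b₃(b₁² + b₂²) = j₃ has exactly two real solutions, namely (b₃/w±, w± b₃, b₃) for the two choices of sign. Moreover w₊ w₋ = 1. -/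
/-!
Subtracting the first two equations gives `(b₁ - b₂) * (b₃ ^ 2 - b₁ * b₂) = 0`. The branch
`b₁ = b₂` is excluded because then `2 |b₁ b₃| ≤ b₁ ^ 2 + b₃ ^ 2` forces `|j₃| ≤ |j₁|`. In the other
branch `b₁, b₃, b₂` is a geometric progression. Since `s` is the positive root of
`j₁ X ^ 2 - j₃ X - 2 j₁`, the data are `j₁ = s t ^ 3` and `j₃ = t ^ 3 (s ^ 2 - 2)` with
`t = (j₁ / s) ^ (1 / 3)`, and the system collapses to two equations in `b₃` and `b₁ + b₂` whose
only positive solution is `b₃ = t`, `b₁ + b₂ = s t`. Then `b₁, b₂` are the roots of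
`X ^ 2 - s t X + t ^ 2`, namely `w₋ t` and `w₊ t`, where `w₊ + w₋ = s` and `w₊ w₋ = 1`.
-/

def DiagonalSystem (j₁ j₂ j₃ b₁ b₂ b₃ : ℝ) : Prop :=
  b₁ * (b₂ ^ 2 + b₃ ^ 2) = j₁ ∧ b₂ * (b₁ ^ 2 + b₃ ^ 2) = j₂ ∧ b₃ * (b₁ ^ 2 + b₂ ^ 2) = j₃

lemma eq_and_eq_or_eq_and_eq_of_add_of_mul {x y a b : ℝ} (hsum : x + y = a + b)
    (hprod : x * y = a * b) : (x = a ∧ y = b) ∨ (x = b ∧ y = a) := by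
  have h : (x - a) * (x - b) = 0 := by linear_combination x * hsum - hprod
  rcases mul_eq_zero.1 h with h | h
  · exact Or.inl ⟨by linarith, by linarith⟩
  · exact Or.inr ⟨by linarith, by linarith⟩

lemma mul_sq_eq_of_eq_add_sqrt {j₁ j₃ s : ℝ} (h₁ : j₁ ≠ 0)
    (hs : s = (j₃ + √(j₃ ^ 2 + 8 * j₁ ^ 2)) / (2 * j₁)) : j₁ * s ^ 2 = j₃ * s + 2 * j₁ := by
  have hroot : j₁ * (s * s) + -j₃ * s + -2 * j₁ = 0 := by
    refine (quadratic_eq_zero_iff h₁ (s := √(j₃ ^ 2 + 8 * j₁ ^ 2)) ?_ s).2 (.inl ?_)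
    · rw [discrim, Real.mul_self_sqrt (by positivity)]; ring
    · rw [hs, neg_neg]
  linear_combination hroot

lemma two_lt_of_mul_sq_eq {j₁ j₃ s : ℝ} (h₁ : 0 < j₁) (h₃₁ : j₁ < j₃) (hs : 0 < s)
    (hroot : j₁ * s ^ 2 = j₃ * s + 2 * j₁) : 2 < s := by
  have h : 0 < j₁ * ((s - 2) * (s + 1)) := by nlinarith [mul_pos (sub_pos.2 h₃₁) hs]
  linarith [pos_of_mul_pos_left (pos_of_mul_pos_right h h₁.le) (by linarith : 0 ≤ s + 1)]

/-- With `u = σ / v`, the equations say `u - 2 / u = s - 2 / s`, and `x ↦ x - 2 / x` is injective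
on `x > 0`; the factorisation below is the polynomial form of this. -/
lemma eq_and_eq_mul_of_sq_mul_eq {s t v σ : ℝ} (hs : 0 < s) (ht : 0 < t) (hv : 0 < v)
    (hσ : 0 < σ) (h₁ : v ^ 2 * σ = t ^ 3 * s)
    (h₃ : v * (σ ^ 2 - 2 * v ^ 2) = t ^ 3 * (s ^ 2 - 2)) : v = t ∧ σ = s * t := by
  have h : v * t ^ 3 * (σ * s + 2 * v) * (σ - s * v) = 0 := by
    linear_combination t ^ 3 * s * h₃ - t ^ 3 * (s ^ 2 - 2) * h₁
  have hσv : σ = s * v := by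
    have : v * t ^ 3 * (σ * s + 2 * v) ≠ 0 := by positivity
    linarith [(mul_eq_zero.1 h).resolve_left this]
  have hvt : v = t := by
    refine (Odd.strictMono_pow (by decide : Odd 3)).injective (mul_left_cancel₀ hs.ne' ?_)
    linear_combination h₁ - v ^ 2 * hσv
  exact ⟨hvt, hvt ▸ hσv⟩

namespace DiagonalSystem

variable {j₁ j₂ j₃ b₁ b₂ b₃ : ℝ}

lemma eq_or_sq_eq_mul (h : DiagonalSystem j₁ j₁ j₃ b₁ b₂ b₃) : b₁ = b₂ ∨ b₃ ^ 2 = b₁ * b₂ := by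
  have : (b₁ - b₂) * (b₃ ^ 2 - b₁ * b₂) = 0 := by linear_combination h.1 - h.2.1
  rcases mul_eq_zero.1 this with hb | hb
  · exact Or.inl (by linarith)
  · exact Or.inr (by linarith)

lemma abs_le_of_eq (h : DiagonalSystem j₁ j₂ j₃ b₁ b₁ b₃) : |j₃| ≤ |j₁| := by
  obtain ⟨h₁, -, h₃⟩ := h
  rw [← h₁, ← h₃]
  have hamgm : 2 * |b₁| * |b₃| ≤ b₁ ^ 2 + b₃ ^ 2 := by
    simpa only [sq_abs] using two_mul_le_add_sq |b₁| |b₃|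
  calc |b₃ * (b₁ ^ 2 + b₁ ^ 2)| = |b₁| * (2 * |b₁| * |b₃|) := by
        rw [abs_mul, abs_of_nonneg (by positivity : 0 ≤ b₁ ^ 2 + b₁ ^ 2), ← sq_abs b₁]; ring
    _ ≤ |b₁| * (b₁ ^ 2 + b₃ ^ 2) := by gcongr
    _ = |b₁ * (b₁ ^ 2 + b₃ ^ 2)| := by
        rw [abs_mul, abs_of_nonneg (by positivity : (0 : ℝ) ≤ b₁ ^ 2 + b₃ ^ 2)]

lemma eq_and_add_eq_of_sq_eq_mul {s t : ℝ} (hs : 2 < s) (ht : 0 < t)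
    (h : DiagonalSystem (s * t ^ 3) j₂ (t ^ 3 * (s ^ 2 - 2)) b₁ b₂ b₃)
    (hgeom : b₃ ^ 2 = b₁ * b₂) : b₃ = t ∧ b₁ + b₂ = s * t := by
  obtain ⟨h₁, -, h₃⟩ := h
  have hE₁ : b₃ ^ 2 * (b₁ + b₂) = t ^ 3 * s := by linear_combination h₁ + b₂ * hgeom
  have hE₃ : b₃ * ((b₁ + b₂) ^ 2 - 2 * b₃ ^ 2) = t ^ 3 * (s ^ 2 - 2) := by
    linear_combination h₃ - 2 * b₃ * hgeom
  have hb₃ : 0 < b₃ := by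
    refine pos_of_mul_pos_left ?_ (by positivity : 0 ≤ b₁ ^ 2 + b₂ ^ 2)
    have : 0 < s ^ 2 - 2 := by nlinarith
    rw [h₃]; positivity
  have hσ : 0 < b₁ + b₂ := by
    refine pos_of_mul_pos_right (a := b₃ ^ 2) ?_ (by positivity)
    rw [hE₁]; positivity
  exact eq_and_eq_mul_of_sq_mul_eq (by linarith) ht hb₃ hσ hE₁ hE₃

lemma of_add_eq_of_mul_eq_one {s t w₁ w₂ : ℝ} (hsum : w₁ + w₂ = s) (hprod : w₁ * w₂ = 1) :
    DiagonalSystem (s * t ^ 3) (s * t ^ 3) (t ^ 3 * (s ^ 2 - 2)) (w₂ * t) (w₁ * t) t := by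
  subst hsum
  refine ⟨?_, ?_, ?_⟩
  · linear_combination t ^ 3 * w₁ * hprod
  · linear_combination t ^ 3 * w₂ * hprod
  · linear_combination -2 * t ^ 3 * hprod

end DiagonalSystem

theorem diagonalSystem_iff {s t w₁ w₂ b₁ b₂ b₃ : ℝ} (hs : 2 < s) (ht : 0 < t)
    (hsum : w₁ + w₂ = s) (hprod : w₁ * w₂ = 1) :
    DiagonalSystem (s * t ^ 3) (s * t ^ 3) (t ^ 3 * (s ^ 2 - 2)) b₁ b₂ b₃ ↔
      (b₁, b₂, b₃) = (t / w₁, w₁ * t, t) ∨ (b₁, b₂, b₃) = (t / w₂, w₂ * t, t) := by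
  have hw₁ : t / w₁ = w₂ * t := by
    rw [div_eq_iff (left_ne_zero_of_mul_eq_one hprod)]; linear_combination -t * hprod
  have hw₂ : t / w₂ = w₁ * t := by
    rw [div_eq_iff (right_ne_zero_of_mul_eq_one hprod)]; linear_combination -t * hprod
  simp only [Prod.mk.injEq, hw₁, hw₂]
  constructor
  · intro h
    rcases h.eq_or_sq_eq_mul with rfl | hgeom
    · have hj : |s * t ^ 3| < |t ^ 3 * (s ^ 2 - 2)| := by
        have hs₀ : 0 < s := by linarith
        have hj₃ : s * t ^ 3 < t ^ 3 * (s ^ 2 - 2) := by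
          nlinarith [mul_pos (pow_pos ht 3) (mul_pos (sub_pos.2 hs) (by linarith : 0 < s + 1))]
        rwa [abs_of_pos (by positivity), abs_of_pos ((by positivity : 0 < s * t ^ 3).trans hj₃)]
      exact absurd h.abs_le_of_eq hj.not_ge
    · obtain ⟨rfl, hσ⟩ := h.eq_and_add_eq_of_sq_eq_mul hs ht hgeom
      rcases eq_and_eq_or_eq_and_eq_of_add_of_mul (x := b₁) (y := b₂) (a := w₂ * b₃)
        (b := w₁ * b₃) (by linear_combination hσ - b₃ * hsum)
        (by linear_combination -hgeom - b₃ ^ 2 * hprod) with ⟨h₁, h₂⟩ | ⟨h₁, h₂⟩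
      · exact Or.inl ⟨h₁, h₂, rfl⟩
      · exact Or.inr ⟨h₁, h₂, rfl⟩
  · rintro (⟨rfl, rfl, rfl⟩ | ⟨rfl, rfl, rfl⟩)
    · exact .of_add_eq_of_mul_eq_one hsum hprod
    · exact .of_add_eq_of_mul_eq_one (by linarith) (by linarith)

/-- Case (5)-(b) of Lemma 5 of the paper: for `j₃ > j₁ = j₂ > 0`, with
`s = (j₃ + √(j₃² + 8j₁²))/(2j₁)` one has `s > 2`, and with
`w± = (s ± √(s² − 4))/2` and `b₃ = (j₁/s)^{1/3}`, the diagonal system has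
exactly two real solutions `(b₃/w±, w± b₃, b₃)`; moreover `w₊ w₋ = 1`. -/
theorem diagonal_system_two_solutions_case_b (j₁ j₃ : ℝ)
    (h₃₁ : j₃ > j₁) (h₁ : j₁ > 0)
    (s wp wm b₃ : ℝ)
    (hs : s = (j₃ + Real.sqrt (j₃ ^ 2 + 8 * j₁ ^ 2)) / (2 * j₁))
    (hwp : wp = (s + Real.sqrt (s ^ 2 - 4)) / 2)
    (hwm : wm = (s - Real.sqrt (s ^ 2 - 4)) / 2)
    (hb3 : b₃ = (j₁ / s) ^ ((1 : ℝ) / 3)) :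
    s > 2 ∧
    (∀ b₁ b₂ c₃ : ℝ,
      (b₁ * (b₂ ^ 2 + c₃ ^ 2) = j₁ ∧ b₂ * (b₁ ^ 2 + c₃ ^ 2) = j₁ ∧
        c₃ * (b₁ ^ 2 + b₂ ^ 2) = j₃) ↔
      ((b₁, b₂, c₃) = (b₃ / wp, wp * b₃, b₃) ∨
       (b₁, b₂, c₃) = (b₃ / wm, wm * b₃, b₃))) ∧
    (b₃ / wp, wp * b₃, b₃) ≠ (b₃ / wm, wm * b₃, b₃) ∧
    wp * wm = 1 := by
  have hs₀ : 0 < s := by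
    rw [hs]; exact div_pos (by linarith [Real.sqrt_nonneg (j₃ ^ 2 + 8 * j₁ ^ 2)]) (by positivity)
  have hroot := mul_sq_eq_of_eq_add_sqrt h₁.ne' hs
  have hs₂ : 2 < s := two_lt_of_mul_sq_eq h₁ h₃₁ hs₀ hroot
  have hb₃ : 0 < b₃ := by rw [hb3]; positivity
  have hj₁ : j₁ = s * b₃ ^ 3 := by
    rw [hb3, one_div, ← Nat.cast_ofNat, Real.rpow_inv_natCast_pow (by positivity) three_ne_zero]
    field_simp
  have hj₃ : j₃ = b₃ ^ 3 * (s ^ 2 - 2) :=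
    mul_right_cancel₀ hs₀.ne' (by linear_combination -hroot + (s ^ 2 - 2) * hj₁)
  have hsqrt : 0 < √(s ^ 2 - 4) := Real.sqrt_pos.2 (by nlinarith)
  have hsum : wp + wm = s := by rw [hwp, hwm]; ring
  have hprod : wp * wm = 1 := by
    rw [hwp, hwm]; linear_combination (-1 / 4 : ℝ) * Real.sq_sqrt (by nlinarith : 0 ≤ s ^ 2 - 4)
  refine ⟨hs₂, ?_, ?_, hprod⟩
  · rw [hj₁, hj₃]
    exact fun b₁ b₂ c₃ ↦ diagonalSystem_iff hs₂ hb₃ hsum hprod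
  · intro h
    simp only [Prod.mk.injEq] at h
    have := mul_right_cancel₀ hb₃.ne' h.2.1
    rw [hwp, hwm] at this; linarith
end

section
/- Let j₁, j₂, j₃ be pairwise distinct positive real numbers, and consider the cubic polynomial f(t) = j₁j₂t³ − (j₁² + j₂² + j₃²)t² + 4j₃². Then f has exactly one real root t₀ in the interval (2, +∞); moreover this root satisfies t₀ > j₂/j₁ + j₁/j₂, and f also has exactly one real root in (0, 2) and exactly one real root in (−∞, 0). -/
open Polynomial in
lemma no_four_roots_cubic (a b c x y z w : ℝ) (ha : a ≠ 0)
    (hx : a * x ^ 3 - b * x ^ 2 + c = 0)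
    (hy : a * y ^ 3 - b * y ^ 2 + c = 0)
    (hz : a * z ^ 3 - b * z ^ 2 + c = 0)
    (hw : a * w ^ 3 - b * w ^ 2 + c = 0)
    (hxy : x ≠ y) (hxz : x ≠ z) (hxw : x ≠ w)
    (hyz : y ≠ z) (hyw : y ≠ w) (hzw : z ≠ w) : False := by
  set P : ℝ[X] := C a * X ^ 3 - C b * X ^ 2 + C c with hP
  have hdeg : P.natDegree = 3 := by
    rw [hP]; compute_degree!
  have hP0 : P ≠ 0 := by
    intro h; rw [h] at hdeg; simp at hdeg
  have hmem : ∀ t : ℝ, a * t ^ 3 - b * t ^ 2 + c = 0 → t ∈ P.roots.toFinset := by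
    intro t ht
    rw [Multiset.mem_toFinset, Polynomial.mem_roots hP0]
    simp [Polynomial.IsRoot, hP, ht]
  have hsub : ({x, y, z, w} : Finset ℝ) ⊆ P.roots.toFinset := by
    intro t ht
    simp only [Finset.mem_insert, Finset.mem_singleton] at ht
    rcases ht with rfl | rfl | rfl | rfl
    exacts [hmem _ hx, hmem _ hy, hmem _ hz, hmem _ hw]
  have hcard : ({x, y, z, w} : Finset ℝ).card = 4 := by
    rw [Finset.card_insert_of_notMem (by simp [hxy, hxz, hxw]),
      Finset.card_insert_of_notMem (by simp [hyz, hyw]),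
      Finset.card_insert_of_notMem (by simp [hzw]), Finset.card_singleton]
  have h1 : ({x, y, z, w} : Finset ℝ).card ≤ P.roots.toFinset.card :=
    Finset.card_le_card hsub
  have h2 : P.roots.toFinset.card ≤ Multiset.card P.roots := Multiset.toFinset_card_le _
  have h3 : Multiset.card P.roots ≤ 3 := hdeg ▸ P.card_roots'
  omega

set_option maxHeartbeats 1000000 in
/-- The resolvent cubic `f(t) = j₁j₂t³ − (j₁² + j₂² + j₃²)t² + 4j₃²` for
pairwise distinct positive `j₁, j₂, j₃` has exactly one real root `t₀ > 2`,
which moreover satisfies `t₀ > j₂/j₁ + j₁/j₂`; it also has exactly one real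
root in `(0, 2)` and exactly one negative real root. -/
theorem resolvent_cubic_roots (j₁ j₂ j₃ : ℝ)
    (h₁ : 0 < j₁) (h₂ : 0 < j₂) (h₃ : 0 < j₃)
    (h₁₂ : j₁ ≠ j₂) (h₁₃ : j₁ ≠ j₃) (h₂₃ : j₂ ≠ j₃)
    (f : ℝ → ℝ)
    (hf : ∀ t, f t = j₁ * j₂ * t ^ 3 - (j₁ ^ 2 + j₂ ^ 2 + j₃ ^ 2) * t ^ 2
      + 4 * j₃ ^ 2) :
    (∃! t : ℝ, 2 < t ∧ f t = 0) ∧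
    (∀ t : ℝ, 2 < t → f t = 0 → j₂ / j₁ + j₁ / j₂ < t) ∧
    (∃! t : ℝ, (0 < t ∧ t < 2) ∧ f t = 0) ∧
    (∃! t : ℝ, t < 0 ∧ f t = 0) := by
  have hA : 0 < j₁ * j₂ := mul_pos h₁ h₂
  have hA' : j₁ * j₂ ≠ 0 := ne_of_gt hA
  have hne12 : j₁ - j₂ ≠ 0 := sub_ne_zero.mpr h₁₂
  -- continuity
  have hcont : Continuous f := by
    have : f = fun t => j₁ * j₂ * t ^ 3 - (j₁ ^ 2 + j₂ ^ 2 + j₃ ^ 2) * t ^ 2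
        + 4 * j₃ ^ 2 := funext hf
    rw [this]; continuity
  -- values at special points
  have hsq : ∀ x : ℝ, x ≠ 0 → 0 < x ^ 2 := fun x hx => by positivity
  have hf0 : 0 < f 0 := by rw [hf]; nlinarith [pow_pos h₃ 2]
  have hf2 : f 2 < 0 := by
    rw [hf]
    nlinarith [hsq _ hne12]
  set s : ℝ := j₂ / j₁ + j₁ / j₂ with hs_def
  have hskey : j₁ * j₂ * s = j₁ ^ 2 + j₂ ^ 2 := by
    rw [hs_def]; field_simp; ring
  have hs2 : 2 < s := by
    nlinarith [hsq _ hne12]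
  have hfs : f s < 0 := by
    have h1 : f s = - j₃ ^ 2 * (s ^ 2 - 4) := by
      rw [hf]; linear_combination s ^ 2 * hskey
    rw [h1]
    have : 0 < s ^ 2 - 4 := by nlinarith
    nlinarith [hsq _ (ne_of_gt h₃)]
  -- big point M
  set M : ℝ := ((j₁ ^ 2 + j₂ ^ 2 + j₃ ^ 2) + j₁ * j₂ * (s + 1)) / (j₁ * j₂) with hM_def
  have hMkey : j₁ * j₂ * M = (j₁ ^ 2 + j₂ ^ 2 + j₃ ^ 2) + j₁ * j₂ * (s + 1) := by
    rw [hM_def]; field_simp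
  have hsM : s < M := by nlinarith [sq_nonneg j₁, sq_nonneg j₂, sq_nonneg j₃, hsq _ (ne_of_gt h₃)]
  have hfM : 0 < f M := by
    have h1 : f M = j₁ * j₂ * (s + 1) * M ^ 2 + 4 * j₃ ^ 2 := by
      rw [hf]; linear_combination M ^ 2 * hMkey
    rw [h1]
    have hs1 : 0 < s + 1 := by linarith
    positivity
  -- negative point N
  set N : ℝ := -(((j₁ ^ 2 + j₂ ^ 2 + j₃ ^ 2) + 4 * j₃ ^ 2 + j₁ * j₂) / (j₁ * j₂)) with hN_def
  have hNkey : j₁ * j₂ * N = -((j₁ ^ 2 + j₂ ^ 2 + j₃ ^ 2) + 4 * j₃ ^ 2 + j₁ * j₂) := by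
    rw [hN_def]; field_simp
  have hN1 : N ≤ -1 := by
    by_contra h
    push_neg at h
    nlinarith [mul_pos hA (show (0:ℝ) < N + 1 by linarith), sq_nonneg (j₁ - j₂), sq_nonneg j₃]
  have hN0 : N < 0 := by linarith
  have hfN : f N < 0 := by
    have h1 : f N = -(2 * (j₁ ^ 2 + j₂ ^ 2 + j₃ ^ 2) + 4 * j₃ ^ 2 + j₁ * j₂) * N ^ 2
        + 4 * j₃ ^ 2 := by
      rw [hf]; linear_combination N ^ 2 * hNkey
    have hN2 : 1 ≤ N ^ 2 := by nlinarith
    nlinarith [sq_nonneg j₁, sq_nonneg j₂, sq_nonneg j₃, hsq _ hne12]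
  -- root in (s, M]
  obtain ⟨t₀, ht₀mem, ht₀⟩ : ∃ t ∈ Set.Icc s M, f t = 0 := by
    have h0 : (0:ℝ) ∈ Set.Icc (f s) (f M) := ⟨hfs.le, hfM.le⟩
    have := intermediate_value_Icc hsM.le hcont.continuousOn h0
    obtain ⟨t, ht, hft⟩ := this
    exact ⟨t, ht, hft⟩
  have ht₀s : s < t₀ := lt_of_le_of_ne ht₀mem.1 (fun h => by rw [← h] at ht₀; linarith)
  have ht₀2 : 2 < t₀ := lt_trans hs2 ht₀s
  -- root in (0, 2)
  obtain ⟨r₀, hr₀mem, hr₀⟩ : ∃ t ∈ Set.Icc (0:ℝ) 2, f t = 0 := by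
    have h0 : (0:ℝ) ∈ Set.Icc (f 2) (f 0) := ⟨hf2.le, hf0.le⟩
    have := intermediate_value_Icc' (by norm_num : (0:ℝ) ≤ 2) hcont.continuousOn h0
    obtain ⟨t, ht, hft⟩ := this
    exact ⟨t, ht, hft⟩
  have hr₀0 : 0 < r₀ := lt_of_le_of_ne hr₀mem.1 (fun h => by rw [← h] at hr₀; linarith)
  have hr₀2 : r₀ < 2 := lt_of_le_of_ne hr₀mem.2 (fun h => by rw [h] at hr₀; linarith)
  -- negative root
  obtain ⟨rN, hrNmem, hrN⟩ : ∃ t ∈ Set.Icc N 0, f t = 0 := by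
    have h0 : (0:ℝ) ∈ Set.Icc (f N) (f 0) := ⟨hfN.le, hf0.le⟩
    have := intermediate_value_Icc (by linarith : N ≤ 0) hcont.continuousOn h0
    obtain ⟨t, ht, hft⟩ := this
    exact ⟨t, ht, hft⟩
  have hrN0 : rN < 0 := lt_of_le_of_ne hrNmem.2 (fun h => by rw [h] at hrN; linarith)
  -- four-root contradiction, specialized
  have hroot : ∀ t, f t = 0 →
      j₁ * j₂ * t ^ 3 - (j₁ ^ 2 + j₂ ^ 2 + j₃ ^ 2) * t ^ 2 + 4 * j₃ ^ 2 = 0 := by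
    intro t ht; rw [hf] at ht; exact ht
  have H4 : ∀ x y : ℝ, f x = 0 → f y = 0 → x ≠ y →
      rN ≠ x → rN ≠ y → r₀ ≠ x → r₀ ≠ y → r₀ ≠ rN → False := by
    intro x y hx hy hxy h1x h1y h2x h2y h21
    exact no_four_roots_cubic (j₁ * j₂) (j₁ ^ 2 + j₂ ^ 2 + j₃ ^ 2) (4 * j₃ ^ 2)
      rN r₀ x y hA' (hroot _ hrN) (hroot _ hr₀) (hroot _ hx) (hroot _ hy)
      (Ne.symm h21) h1x h1y h2x h2y hxy
  refine ⟨⟨t₀, ⟨ht₀2, ht₀⟩, ?_⟩, ?_, ⟨r₀, ⟨⟨hr₀0, hr₀2⟩, hr₀⟩, ?_⟩, ⟨rN, ⟨hrN0, hrN⟩, ?_⟩⟩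
  · rintro t ⟨ht2, htf⟩
    by_contra hne
    exact H4 t t₀ htf ht₀ hne (ne_of_lt (by linarith)) (ne_of_lt (by linarith))
      (ne_of_lt (by linarith)) (ne_of_lt (by linarith)) (ne_of_gt (by linarith))
  · intro t ht2 htf
    have : t = t₀ := by
      by_contra hne
      exact H4 t t₀ htf ht₀ hne (ne_of_lt (by linarith)) (ne_of_lt (by linarith))
        (ne_of_lt (by linarith)) (ne_of_lt (by linarith)) (ne_of_gt (by linarith))
    rw [this]; exact ht₀s
  · rintro t ⟨⟨ht0, ht2⟩, htf⟩
    by_contra hne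
    exact H4 t t₀ htf ht₀ (ne_of_lt (by linarith)) (ne_of_lt (by linarith))
      (ne_of_lt (by linarith)) (fun h => hne h.symm) (ne_of_lt (by linarith))
      (ne_of_gt (by linarith))
  · rintro t ⟨ht0, htf⟩
    by_contra hne
    exact H4 t t₀ htf ht₀ (ne_of_lt (by linarith)) (fun h => hne h.symm)
      (ne_of_lt (by linarith)) (ne_of_gt (by linarith)) (ne_of_lt (by linarith))
      (ne_of_gt (by linarith))
end

section
/- Let j₁, j₂, j₃ be pairwise distinct positive real numbers, and let t₀ > 2 be a real root of j₁j₂t³ − (j₁² + j₂² + j₃²)t² + 4j₃² = 0. Set y± = (t₀ ± √(t₀² − 4))/2. Then the quantities y±(j₁ − j₂y±)/(j₂ − j₁y±) are positive, and with z± = √(y±(j₁ − j₂y±)/(j₂ − j₁y±)), b₁± = (j₃/(t₀ y± z±))^{1/3}, b₂± = y± b₁±, b₃± = z± b₁±, the system b₁(b₂² + b₃²) = j₁, b₂(b₁² + b₃²) = j₂, b₃(b₁² + b₂²) = j₃ has exactly two real solutions, namely (b₁₊, b₂₊, b₃₊) and (b₁₋, b₂₋, b₃₋). -/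
set_option maxHeartbeats 1000000

private lemma cube_eq_of_pos {a b : ℝ} (ha : 0 < a) (hb : 0 < b) (h : a^3 = b^3) : a = b := by
  nlinarith [sq_nonneg (a - b), sq_nonneg (a + b), mul_pos ha hb]

private lemma sq_eq_of_pos {a b : ℝ} (ha : 0 < a) (hb : 0 < b) (h : a^2 = b^2) : a = b := by
  nlinarith [sq_nonneg (a - b)]

private lemma eq_of_sq_eq_of_mul_pos {a b : ℝ} (h : a^2 = b^2) (hp : 0 < a * b) : a = b := by
  have h2 : (a - b) * (a + b) = 0 := by linear_combination h
  rcases mul_eq_zero.mp h2 with h3 | h3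
  · exact sub_eq_zero.mp h3
  · exfalso; nlinarith [sq_nonneg a]

private lemma root_unique (j₁ j₂ j₃ t₀ t₁ : ℝ) (h₁ : 0 < j₁) (h₂ : 0 < j₂) (h₁₂ : j₁ ≠ j₂)
    (ht₀ : 2 < t₀) (ht₁ : 2 < t₁)
    (h0 : j₁ * j₂ * t₀ ^ 3 - (j₁ ^ 2 + j₂ ^ 2 + j₃ ^ 2) * t₀ ^ 2 + 4 * j₃ ^ 2 = 0)
    (h1 : j₁ * j₂ * t₁ ^ 3 - (j₁ ^ 2 + j₂ ^ 2 + j₃ ^ 2) * t₁ ^ 2 + 4 * j₃ ^ 2 = 0) :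
    t₁ = t₀ := by
  by_contra hne
  have hsub : (t₁ - t₀) * (j₁*j₂*(t₀^2 + t₀*t₁ + t₁^2) - (j₁^2+j₂^2+j₃^2)*(t₀+t₁)) = 0 := by
    linear_combination h1 - h0
  have hstar : j₁*j₂*(t₀^2 + t₀*t₁ + t₁^2) - (j₁^2+j₂^2+j₃^2)*(t₀+t₁) = 0 := by
    rcases mul_eq_zero.mp hsub with h | h
    · exact absurd (sub_eq_zero.mp h) hne
    · exact h
  have hkey : (-4*(j₁-j₂)^2) * (t₀+t₁)
      = j₁*j₂*((t₀*t₁ - 2*(t₀+t₁) + 4) * (t₀*t₁ + 2*(t₀+t₁))) := by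
    linear_combination (t₀+t₁) * h0 - (t₀^2-4) * hstar
  have hjj : 0 < (j₁ - j₂)^2 := by
    rcases (sub_ne_zero.mpr h₁₂).lt_or_gt with h | h
    · linarith [mul_pos_of_neg_of_neg h h]
    · linarith [mul_pos h h]
  have hf1 : 0 < t₀*t₁ - 2*(t₀+t₁) + 4 := by
    linarith [mul_pos (show (0:ℝ) < t₀ - 2 by linarith) (show (0:ℝ) < t₁ - 2 by linarith)]
  have hf2 : 0 < t₀*t₁ + 2*(t₀+t₁) := by
    linarith [mul_pos (show (0:ℝ) < t₀ by linarith) (show (0:ℝ) < t₁ by linarith)]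
  linarith [hkey, mul_pos (mul_pos h₁ h₂) (mul_pos hf1 hf2),
    mul_pos hjj (show (0:ℝ) < t₀ + t₁ by linarith)]

private lemma aux_root (j₁ j₂ j₃ t₀ y z b1 : ℝ)
    (h₁ : 0 < j₁) (h₂ : 0 < j₂) (h₃ : 0 < j₃) (ht₀ : 2 < t₀)
    (hy : 0 < y)
    (hq : y^2 - t₀*y + 1 = 0)
    (hroot : j₁ * j₂ * t₀ ^ 3 - (j₁ ^ 2 + j₂ ^ 2 + j₃ ^ 2) * t₀ ^ 2 + 4 * j₃ ^ 2 = 0)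
    (hz : z = Real.sqrt (y * (j₁ - j₂ * y) / (j₂ - j₁ * y)))
    (hb1 : b1 = (j₃ / (t₀ * y * z)) ^ ((1 : ℝ) / 3)) :
    0 < y * (j₁ - j₂ * y) / (j₂ - j₁ * y) ∧ 0 < z ∧ 0 < b1 ∧
    z^2 * (j₂ - j₁*y) = y * (j₁ - j₂*y) ∧ (j₂ - j₁*y) ≠ 0 ∧
    b1^3 * (t₀*y*z) = j₃ ∧
    b1 * ((y*b1)^2 + (z*b1)^2) = j₁ ∧ (y*b1) * (b1^2 + (z*b1)^2) = j₂ ∧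
    (z*b1) * (b1^2 + (y*b1)^2) = j₃ := by
  have ht0p : 0 < t₀ := by linarith
  have ht2 : 0 < t₀^2 - 4 := by
    linarith [mul_pos (show (0:ℝ) < t₀ - 2 by linarith) (show (0:ℝ) < t₀ + 2 by linarith)]
  have hres : 0 < j₁*j₂*t₀ - (j₁^2 + j₂^2) := by
    by_contra h
    push_neg at h
    have h5 : j₃^2*(t₀^2-4) = t₀^2*(j₁*j₂*t₀ - (j₁^2+j₂^2)) := by linear_combination -hroot
    have h6 : t₀^2*(j₁*j₂*t₀ - (j₁^2+j₂^2)) ≤ 0 :=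
      mul_nonpos_iff.mpr (Or.inl ⟨sq_nonneg t₀, h⟩)
    have h7 : 0 < j₃^2*(t₀^2-4) := mul_pos (pow_pos h₃ 2) ht2
    linarith
  have heq : (j₂*y - j₁) * (j₁*y - j₂) = y * (j₁*j₂*t₀ - (j₁^2+j₂^2)) := by
    linear_combination j₁*j₂*hq
  have hpp : 0 < (j₂*y - j₁) * (j₁*y - j₂) := heq ▸ mul_pos hy hres
  have hy1 : y ≠ 1 := by intro h; rw [h] at hq; linarith [hq]
  have key : 0 < y * (j₁ - j₂ * y) / (j₂ - j₁ * y) ∧ 0 < (j₂ - j₁*y) * (1 - y^2) := by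
    rcases mul_pos_iff.mp hpp with ⟨ha, hb⟩ | ⟨ha, hb⟩
    · -- both positive, so y > 1
      have hygt : 1 < y := by
        by_contra h
        push_neg at h
        have := mul_nonneg (by linarith : (0:ℝ) ≤ j₁ + j₂) (by linarith : (0:ℝ) ≤ 1 - y)
        nlinarith
      have hy2 : 1 < y^2 := by
        linarith [mul_pos (show (0:ℝ) < y - 1 by linarith) (show (0:ℝ) < y + 1 by linarith)]
      constructor
      · apply div_pos_iff.mpr; right
        exact ⟨mul_neg_of_pos_of_neg hy (by linarith), by linarith⟩
      · exact mul_pos_of_neg_of_neg (by linarith) (by linarith)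
    · -- both negative, so y < 1
      have hylt : y < 1 := by
        by_contra h
        push_neg at h
        have := mul_nonneg (by linarith : (0:ℝ) ≤ j₁ + j₂) (by linarith : (0:ℝ) ≤ y - 1)
        nlinarith
      have hy2 : y^2 < 1 := by
        linarith [mul_pos (show (0:ℝ) < 1 - y by linarith) (show (0:ℝ) < 1 + y by linarith)]
      constructor
      · apply div_pos_iff.mpr; left
        exact ⟨mul_pos hy (by linarith), by linarith⟩
      · exact mul_pos (by linarith) (by linarith)
  obtain ⟨hw, hsign⟩ := key
  have hden : (j₂ - j₁*y) ≠ 0 := by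
    intro h; rw [h, zero_mul] at hsign; exact lt_irrefl 0 hsign
  have hzpos : 0 < z := by rw [hz]; exact Real.sqrt_pos.mpr hw
  have hz2 : z^2 = y * (j₁ - j₂ * y) / (j₂ - j₁ * y) := by rw [hz]; exact Real.sq_sqrt hw.le
  have hA : z^2 * (j₂ - j₁*y) = y * (j₁ - j₂*y) := by
    rw [hz2, div_mul_cancel₀ _ hden]
  have hE : (j₁ - j₂*y) * (j₂ - j₁*y) * (1 + y^2)^2 = j₃^2 * y * (1 - y^2)^2 := by
    linear_combination y^3 * hroot +
      (((j₁*j₂*t₀ - j₁^2 - j₂^2)*y + j₁*j₂*(y^2 - t₀*y + 1) - j₃^2*y) * (2*t₀*y + (y^2 - t₀*y + 1))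
        + j₁*j₂*t₀^2*y^2) * hq
  have hDsq : (z*(1+y^2)*(j₂ - j₁*y))^2 = (j₃*y*(1-y^2))^2 := by
    linear_combination (1+y^2)^2 * (j₂ - j₁*y) * hA + y * hE
  have hy2pos : 0 < 1 + y^2 := by positivity
  have hDpos : 0 < (z*(1+y^2)*(j₂ - j₁*y)) * (j₃*y*(1-y^2)) := by
    have h5 : 0 < z*(1+y^2)*j₃*y := mul_pos (mul_pos (mul_pos hzpos hy2pos) h₃) hy
    have h6 : (z*(1+y^2)*(j₂ - j₁*y)) * (j₃*y*(1-y^2))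
        = (z*(1+y^2)*j₃*y) * ((j₂ - j₁*y)*(1-y^2)) := by ring
    rw [h6]; exact mul_pos h5 hsign
  have hD : z*(1+y^2)*(j₂ - j₁*y) = j₃*y*(1-y^2) := eq_of_sq_eq_of_mul_pos hDsq hDpos
  have hC0 : (j₃*y*(1+z^2) - j₂*z*(1+y^2)) * (j₂ - j₁*y) = 0 := by
    linear_combination j₃*y*hA - j₂*hD
  have hC : j₃*y*(1+z^2) = j₂*z*(1+y^2) := by
    rcases mul_eq_zero.mp hC0 with h | h
    · linarith [sub_eq_zero.mp h]
    · exact absurd h hden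
  have hx : 0 < j₃ / (t₀ * y * z) := div_pos h₃ (mul_pos (mul_pos ht0p hy) hzpos)
  have hb1pos : 0 < b1 := by rw [hb1]; exact Real.rpow_pos_of_pos hx _
  have hcube : b1^3 = j₃ / (t₀ * y * z) := by
    rw [hb1, ← Real.rpow_natCast (_ ^ ((1:ℝ)/3)) 3, ← Real.rpow_mul hx.le]
    norm_num
  have hcb : b1^3 * (t₀*y*z) = j₃ := by
    rw [hcube]
    field_simp
  have hA2 : j₂*(y^2+z^2) = j₁*(y*(1+z^2)) := by linear_combination hA
  refine ⟨hw, hzpos, hb1pos, hA, hden, hcb, ?_, ?_, ?_⟩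
  · apply mul_left_cancel₀ (ne_of_gt (mul_pos h₂ h₃))
    linear_combination j₃*b1^3*hA2 + j₁*b1^3*hC + j₁*j₂*z*b1^3*hq + j₁*j₂*hcb
  · apply mul_left_cancel₀ (ne_of_gt h₃)
    linear_combination b1^3*hC + j₂*z*b1^3*hq + j₂*hcb
  · linear_combination z*b1^3*hq + hcb

/-- Case (5)-(c) of Lemma 5 of the paper: for pairwise distinct positive
`j₁, j₂, j₃` and `t₀ > 2` a root of the resolvent cubic, with
`y± = (t₀ ± √(t₀² − 4))/2`, the quantities `y±(j₁ − j₂y±)/(j₂ − j₁y±)` are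
positive, and with `z± = √(y±(j₁ − j₂y±)/(j₂ − j₁y±))`,
`b₁± = (j₃/(t₀y±z±))^{1/3}`, `b₂± = y±b₁±`, `b₃± = z±b₁±`, the diagonal
system has exactly two real solutions, namely `(b₁₊, b₂₊, b₃₊)` and
`(b₁₋, b₂₋, b₃₋)`. -/
theorem diagonal_system_two_solutions_case_c (j₁ j₂ j₃ : ℝ)
    (h₁ : 0 < j₁) (h₂ : 0 < j₂) (h₃ : 0 < j₃)
    (h₁₂ : j₁ ≠ j₂) (h₁₃ : j₁ ≠ j₃) (h₂₃ : j₂ ≠ j₃)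
    (t₀ : ℝ) (ht₀ : 2 < t₀)
    (hroot : j₁ * j₂ * t₀ ^ 3 - (j₁ ^ 2 + j₂ ^ 2 + j₃ ^ 2) * t₀ ^ 2
      + 4 * j₃ ^ 2 = 0)
    (yp ym zp zm b1p b1m b2p b2m b3p b3m : ℝ)
    (hyp : yp = (t₀ + Real.sqrt (t₀ ^ 2 - 4)) / 2)
    (hym : ym = (t₀ - Real.sqrt (t₀ ^ 2 - 4)) / 2)
    (hzp : zp = Real.sqrt (yp * (j₁ - j₂ * yp) / (j₂ - j₁ * yp)))
    (hzm : zm = Real.sqrt (ym * (j₁ - j₂ * ym) / (j₂ - j₁ * ym)))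
    (hb1p : b1p = (j₃ / (t₀ * yp * zp)) ^ ((1 : ℝ) / 3))
    (hb1m : b1m = (j₃ / (t₀ * ym * zm)) ^ ((1 : ℝ) / 3))
    (hb2p : b2p = yp * b1p) (hb2m : b2m = ym * b1m)
    (hb3p : b3p = zp * b1p) (hb3m : b3m = zm * b1m) :
    0 < yp * (j₁ - j₂ * yp) / (j₂ - j₁ * yp) ∧
    0 < ym * (j₁ - j₂ * ym) / (j₂ - j₁ * ym) ∧
    (∀ b₁ b₂ b₃ : ℝ,
      (b₁ * (b₂ ^ 2 + b₃ ^ 2) = j₁ ∧ b₂ * (b₁ ^ 2 + b₃ ^ 2) = j₂ ∧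
        b₃ * (b₁ ^ 2 + b₂ ^ 2) = j₃) ↔
      ((b₁, b₂, b₃) = (b1p, b2p, b3p) ∨ (b₁, b₂, b₃) = (b1m, b2m, b3m))) ∧
    (b1p, b2p, b3p) ≠ (b1m, b2m, b3m) := by
  have hd2 : 0 < t₀ ^ 2 - 4 := by
    linarith [mul_pos (show (0:ℝ) < t₀ - 2 by linarith) (show (0:ℝ) < t₀ + 2 by linarith)]
  have hdpos : 0 < Real.sqrt (t₀ ^ 2 - 4) := Real.sqrt_pos.mpr hd2
  have hds : Real.sqrt (t₀ ^ 2 - 4) ^ 2 = t₀ ^ 2 - 4 := Real.sq_sqrt hd2.le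
  have hdlt : Real.sqrt (t₀ ^ 2 - 4) < t₀ := by
    by_contra h
    push_neg at h
    have h2 : t₀*t₀ ≤ Real.sqrt (t₀ ^ 2 - 4) * Real.sqrt (t₀ ^ 2 - 4) :=
      mul_self_le_mul_self (by linarith) h
    nlinarith [hds]
  have hyppos : 0 < yp := by rw [hyp]; linarith
  have hympos : 0 < ym := by rw [hym]; linarith
  have hqp : yp^2 - t₀*yp + 1 = 0 := by rw [hyp]; linear_combination hds / 4
  have hqm : ym^2 - t₀*ym + 1 = 0 := by rw [hym]; linear_combination hds / 4
  have hsum : yp + ym = t₀ := by rw [hyp, hym]; ring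
  have hprod : yp * ym = 1 := by rw [hyp, hym]; linear_combination (-1/4) * hds
  have hymlt : ym < yp := by rw [hyp, hym]; linarith
  obtain ⟨hwp, hzppos, hb1ppos, hAp, hdenp, hcbp, heq1p, heq2p, heq3p⟩ :=
    aux_root j₁ j₂ j₃ t₀ yp zp b1p h₁ h₂ h₃ ht₀ hyppos hqp hroot hzp hb1p
  obtain ⟨hwm, hzmpos, hb1mpos, hAm, hdenm, hcbm, heq1m, heq2m, heq3m⟩ :=
    aux_root j₁ j₂ j₃ t₀ ym zm b1m h₁ h₂ h₃ ht₀ hympos hqm hroot hzm hb1m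
  refine ⟨hwp, hwm, ?_, ?_⟩
  · intro b₁ b₂ b₃
    constructor
    · rintro ⟨hs1, hs2, hs3⟩
      -- positivity of the solution
      have hss1 : 0 < b₂^2 + b₃^2 := by
        rcases (lt_or_eq_of_le (by positivity : (0:ℝ) ≤ b₂^2 + b₃^2)) with h | h
        · exact h
        · exfalso
          rw [← h, mul_zero] at hs1
          linarith
      have hb₁pos : 0 < b₁ := by
        by_contra h
        push_neg at h
        have := mul_nonpos_iff.mpr (Or.inr ⟨h, hss1.le⟩)
        linarith [hs1.symm ▸ this]
      have hss2 : 0 < b₁^2 + b₃^2 := by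
        linarith [mul_pos hb₁pos hb₁pos, sq_nonneg b₃]
      have hb₂pos : 0 < b₂ := by
        by_contra h
        push_neg at h
        have := mul_nonpos_iff.mpr (Or.inr ⟨h, hss2.le⟩)
        linarith [hs2.symm ▸ this]
      have hss3 : 0 < b₁^2 + b₂^2 := by
        linarith [mul_pos hb₁pos hb₁pos, sq_nonneg b₂]
      have hb₃pos : 0 < b₃ := by
        by_contra h
        push_neg at h
        have := mul_nonpos_iff.mpr (Or.inr ⟨h, hss3.le⟩)
        linarith [hs3.symm ▸ this]
      have hb₁ne : b₁ ≠ 0 := ne_of_gt hb₁pos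
      obtain ⟨y, hby⟩ : ∃ y, b₂ = y * b₁ := ⟨b₂ / b₁, (div_mul_cancel₀ _ hb₁ne).symm⟩
      obtain ⟨z, hbz⟩ : ∃ z, b₃ = z * b₁ := ⟨b₃ / b₁, (div_mul_cancel₀ _ hb₁ne).symm⟩
      have hypos : 0 < y := by
        by_contra h
        push_neg at h
        have := mul_nonpos_iff.mpr (Or.inr ⟨h, hb₁pos.le⟩)
        rw [← hby] at this
        linarith
      have hzpos : 0 < z := by
        by_contra h
        push_neg at h
        have := mul_nonpos_iff.mpr (Or.inr ⟨h, hb₁pos.le⟩)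
        rw [← hbz] at this
        linarith
      have e1 : b₁^3 * (y^2 + z^2) = j₁ := by rw [← hs1, hby, hbz]; ring
      have e2 : b₁^3 * (y*(1 + z^2)) = j₂ := by rw [← hs2, hby, hbz]; ring
      have e3 : b₁^3 * (z*(1 + y^2)) = j₃ := by rw [← hs3, hby, hbz]; ring
      have hb3ne : b₁^3 ≠ 0 := pow_ne_zero 3 hb₁ne
      have hA' : j₂ * (y^2 + z^2) = j₁ * (y*(1 + z^2)) := by
        apply mul_right_cancel₀ hb3ne
        linear_combination j₂ * e1 - j₁ * e2
      have hC' : j₃ * (y*(1 + z^2)) = j₂ * (z*(1 + y^2)) := by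
        apply mul_right_cancel₀ hb3ne
        linear_combination j₃ * e2 - j₂ * e3
      have hyne1 : y ≠ 1 := by
        intro h
        apply h₁₂
        rw [h] at hA'
        have h5 : (j₁ - j₂) * (1 + z^2) = 0 := by linear_combination -hA'
        rcases mul_eq_zero.mp h5 with h6 | h6
        · exact sub_eq_zero.mp h6
        · exfalso; linarith [sq_nonneg z]
      have hD' : z*(1+y^2)*(j₂ - j₁*y) = j₃*y*(1-y^2) := by
        apply mul_right_cancel₀ (ne_of_gt h₂)
        linear_combination j₃*y*hA' - (j₂ - j₁*y)*hC'
      have hEy : (j₁ - j₂*y)*(j₂ - j₁*y)*(1+y^2)^2 = j₃^2*y*(1-y^2)^2 := by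
        apply mul_right_cancel₀ (ne_of_gt hypos)
        linear_combination (z*(1+y^2)*(j₂ - j₁*y) + j₃*y*(1-y^2))*hD'
          - (1+y^2)^2*(j₂ - j₁*y)*hA'
      have hq₁ : y^2 - (y + 1/y)*y + 1 = 0 := by field_simp; ring
      have ht₁2 : 2 < y + 1/y := by
        have h' : 0 < (y-1)^2 := by
          rcases (sub_ne_zero.mpr hyne1).lt_or_gt with h | h
          · linarith [mul_pos_of_neg_of_neg h h]
          · linarith [mul_pos h h]
        have h8 : y + 1/y - 2 = (y-1)^2 / y := by field_simp; ring
        have h9 : 0 < y + 1/y - 2 := h8 ▸ div_pos h' hypos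
        linarith
      have hres₁ : j₁ * j₂ * (y + 1/y) ^ 3 - (j₁ ^ 2 + j₂ ^ 2 + j₃ ^ 2) * (y + 1/y) ^ 2
          + 4 * j₃ ^ 2 = 0 := by
        have h0 : (j₁ * j₂ * (y + 1/y) ^ 3 - (j₁ ^ 2 + j₂ ^ 2 + j₃ ^ 2) * (y + 1/y) ^ 2
            + 4 * j₃ ^ 2) * y^3 = 0 := by
          linear_combination hEy -
            (((j₁*j₂*(y + 1/y) - j₁^2 - j₂^2)*y + j₁*j₂*(y^2 - (y + 1/y)*y + 1) - j₃^2*y)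
              * (2*(y + 1/y)*y + (y^2 - (y + 1/y)*y + 1)) + j₁*j₂*(y + 1/y)^2*y^2) * hq₁
        rcases mul_eq_zero.mp h0 with h | h
        · exact h
        · exact absurd h (pow_ne_zero 3 (ne_of_gt hypos))
      have htt : y + 1/y = t₀ :=
        root_unique j₁ j₂ j₃ t₀ (y + 1/y) h₁ h₂ h₁₂ ht₀ ht₁2 hroot hres₁
      have hq₀ : y^2 - t₀*y + 1 = 0 := by rw [← htt]; exact hq₁
      have hcases : y = yp ∨ y = ym := by
        have h0 : (y - yp)*(y - ym) = 0 := by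
          linear_combination hq₀ - y*hsum + hprod
        rcases mul_eq_zero.mp h0 with h | h
        · exact Or.inl (sub_eq_zero.mp h)
        · exact Or.inr (sub_eq_zero.mp h)
      rcases hcases with hc | hc
      · subst hc
        left
        have hAy : z^2 * (j₂ - j₁*y) = y * (j₁ - j₂*y) := by linear_combination hA'
        have hzz : z = zp := by
          apply sq_eq_of_pos hzpos hzppos
          have h0 : (z^2 - zp^2) * (j₂ - j₁*y) = 0 := by linear_combination hAy - hAp
          rcases mul_eq_zero.mp h0 with h | h
          · linarith [sub_eq_zero.mp h]
          · exact absurd h hdenp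
        subst hzz
        have hb₁eq : b₁ = b1p := by
          apply cube_eq_of_pos hb₁pos hb1ppos
          apply mul_right_cancel₀
            (ne_of_gt (mul_pos (mul_pos (show (0:ℝ) < t₀ by linarith) hypos) hzpos))
          linear_combination e3 - b₁^3*z*hqp - hcbp
        simp only [Prod.mk.injEq]
        exact ⟨hb₁eq, by rw [hby, hb2p, hb₁eq], by rw [hbz, hb3p, hb₁eq]⟩
      · subst hc
        right
        have hAy : z^2 * (j₂ - j₁*y) = y * (j₁ - j₂*y) := by linear_combination hA'
        have hzz : z = zm := by
          apply sq_eq_of_pos hzpos hzmpos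
          have h0 : (z^2 - zm^2) * (j₂ - j₁*y) = 0 := by linear_combination hAy - hAm
          rcases mul_eq_zero.mp h0 with h | h
          · linarith [sub_eq_zero.mp h]
          · exact absurd h hdenm
        subst hzz
        have hb₁eq : b₁ = b1m := by
          apply cube_eq_of_pos hb₁pos hb1mpos
          apply mul_right_cancel₀
            (ne_of_gt (mul_pos (mul_pos (show (0:ℝ) < t₀ by linarith) hypos) hzpos))
          linear_combination e3 - b₁^3*z*hqm - hcbm
        simp only [Prod.mk.injEq]
        exact ⟨hb₁eq, by rw [hby, hb2m, hb₁eq], by rw [hbz, hb3m, hb₁eq]⟩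
    · rintro (h | h) <;>
      · simp only [Prod.mk.injEq] at h
        obtain ⟨e1, e2, e3⟩ := h
        subst e1; subst e2; subst e3
        first
        | exact ⟨by rw [hb2p, hb3p]; exact heq1p,
            by rw [hb2p, hb3p]; exact heq2p,
            by rw [hb2p, hb3p]; exact heq3p⟩
        | exact ⟨by rw [hb2m, hb3m]; exact heq1m,
            by rw [hb2m, hb3m]; exact heq2m,
            by rw [hb2m, hb3m]; exact heq3m⟩
  · intro h
    simp only [Prod.mk.injEq] at h
    obtain ⟨e1, e2, e3⟩ := h
    rw [hb2p, hb2m, ← e1] at e2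
    have h5 : yp = ym := mul_right_cancel₀ (ne_of_gt hb1ppos) e2
    linarith
end

section
/- Let j₁, j₂, j₃ be pairwise distinct positive real numbers, let t₀ > 2 be a real root of j₁j₂t³ − (j₁² + j₂² + j₃²)t² + 4j₃² = 0, and set y± = (t₀ ± √(t₀² − 4))/2, z± = √(y±(j₁ − j₂y±)/(j₂ − j₁y±)), b₁± = (j₃/(t₀ y± z±))^{1/3}, b₂± = y± b₁±, b₃± = z± b₁±. Then y₊ y₋ = 1, z₊ z₋ = 1, and b₁₊b₁₋ = b₂₊b₂₋ = b₃₊b₃₋ = (b₁₊b₂₊b₃₊)^{2/3} = (b₁₋b₂₋b₃₋)^{2/3} = (j₃/t₀)^{2/3}. -/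
set_option maxHeartbeats 800000


/-- Invariant products in Case (5)-(c) of Lemma 5 of the paper: with the
notation of that case, `y₊y₋ = 1`, `z₊z₋ = 1`, and
`b₁₊b₁₋ = b₂₊b₂₋ = b₃₊b₃₋ = (b₁₊b₂₊b₃₊)^{2/3} = (b₁₋b₂₋b₃₋)^{2/3}
= (j₃/t₀)^{2/3}`. -/
theorem diagonal_system_case_c_invariant_products (j₁ j₂ j₃ : ℝ)
    (h₁ : 0 < j₁) (h₂ : 0 < j₂) (h₃ : 0 < j₃)
    (h₁₂ : j₁ ≠ j₂) (h₁₃ : j₁ ≠ j₃) (h₂₃ : j₂ ≠ j₃)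
    (t₀ : ℝ) (ht₀ : 2 < t₀)
    (hroot : j₁ * j₂ * t₀ ^ 3 - (j₁ ^ 2 + j₂ ^ 2 + j₃ ^ 2) * t₀ ^ 2
      + 4 * j₃ ^ 2 = 0)
    (yp ym zp zm b1p b1m b2p b2m b3p b3m : ℝ)
    (hyp : yp = (t₀ + Real.sqrt (t₀ ^ 2 - 4)) / 2)
    (hym : ym = (t₀ - Real.sqrt (t₀ ^ 2 - 4)) / 2)
    (hzp : zp = Real.sqrt (yp * (j₁ - j₂ * yp) / (j₂ - j₁ * yp)))
    (hzm : zm = Real.sqrt (ym * (j₁ - j₂ * ym) / (j₂ - j₁ * ym)))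
    (hb1p : b1p = (j₃ / (t₀ * yp * zp)) ^ ((1 : ℝ) / 3))
    (hb1m : b1m = (j₃ / (t₀ * ym * zm)) ^ ((1 : ℝ) / 3))
    (hb2p : b2p = yp * b1p) (hb2m : b2m = ym * b1m)
    (hb3p : b3p = zp * b1p) (hb3m : b3m = zm * b1m) :
    yp * ym = 1 ∧ zp * zm = 1 ∧
    b1p * b1m = (j₃ / t₀) ^ ((2 : ℝ) / 3) ∧
    b2p * b2m = (j₃ / t₀) ^ ((2 : ℝ) / 3) ∧
    b3p * b3m = (j₃ / t₀) ^ ((2 : ℝ) / 3) ∧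
    (b1p * b2p * b3p) ^ ((2 : ℝ) / 3) = (j₃ / t₀) ^ ((2 : ℝ) / 3) ∧
    (b1m * b2m * b3m) ^ ((2 : ℝ) / 3) = (j₃ / t₀) ^ ((2 : ℝ) / 3) := by
  have ht0pos : (0:ℝ) < t₀ := by linarith
  have hd4 : (0:ℝ) < t₀ ^ 2 - 4 := by nlinarith
  set s := Real.sqrt (t₀ ^ 2 - 4) with hs
  have hs2 : s ^ 2 = t₀ ^ 2 - 4 := Real.sq_sqrt hd4.le
  have hspos : 0 < s := Real.sqrt_pos.mpr hd4
  have hslt : s < t₀ := by nlinarith [hs2, hspos]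
  have hyppos : 0 < yp := by rw [hyp]; linarith
  have hympos : 0 < ym := by rw [hym]; linarith
  have hyy : yp * ym = 1 := by rw [hyp, hym]; nlinarith [hs2]
  have hsum : yp + ym = t₀ := by rw [hyp, hym]; ring
  have hylt : ym < yp := by rw [hyp, hym]; linarith
  -- from the root equation: j₁ j₂ t₀ > j₁² + j₂²
  have hK : j₁ ^ 2 + j₂ ^ 2 - j₁ * j₂ * t₀ < 0 := by
    nlinarith [mul_pos (mul_pos h₃ h₃) hd4, pow_pos ht0pos 2]
  -- sign analysis
  have hprod1eq : (j₁ - j₂ * yp) * (j₁ - j₂ * ym) = j₁ ^ 2 + j₂ ^ 2 - j₁ * j₂ * t₀ := by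
    linear_combination j₂ ^ 2 * hyy - j₁ * j₂ * hsum
  have hprod2eq : (j₂ - j₁ * yp) * (j₂ - j₁ * ym) = j₁ ^ 2 + j₂ ^ 2 - j₁ * j₂ * t₀ := by
    linear_combination j₁ ^ 2 * hyy - j₁ * j₂ * hsum
  have hprod1 : (j₁ - j₂ * yp) * (j₁ - j₂ * ym) < 0 := by rw [hprod1eq]; exact hK
  have hprod2 : (j₂ - j₁ * yp) * (j₂ - j₁ * ym) < 0 := by rw [hprod2eq]; exact hK
  have hAp : j₁ - j₂ * yp < 0 := by nlinarith [hprod1, mul_pos h₂ (sub_pos.mpr hylt)]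
  have hAm : 0 < j₁ - j₂ * ym := by nlinarith [hprod1, hAp]
  have hBp : j₂ - j₁ * yp < 0 := by nlinarith [hprod2, mul_pos h₁ (sub_pos.mpr hylt)]
  have hBm : 0 < j₂ - j₁ * ym := by nlinarith [hprod2, hBp]
  have hap : 0 < yp * (j₁ - j₂ * yp) / (j₂ - j₁ * yp) :=
    div_pos_of_neg_of_neg (by nlinarith) hBp
  have ham : 0 < ym * (j₁ - j₂ * ym) / (j₂ - j₁ * ym) :=
    div_pos (by positivity) hBm
  have hprodam : yp * (j₁ - j₂ * yp) / (j₂ - j₁ * yp) *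
      (ym * (j₁ - j₂ * ym) / (j₂ - j₁ * ym)) = 1 := by
    rw [div_mul_div_comm]
    rw [div_eq_one_iff_eq (by nlinarith [hprod2] : (j₂ - j₁ * yp) * (j₂ - j₁ * ym) ≠ 0)]
    linear_combination (j₂^2*(yp*ym+1) - j₁*j₂*(yp+ym)) * hyy
  have hzppos : 0 < zp := by rw [hzp]; exact Real.sqrt_pos.mpr hap
  have hzmpos : 0 < zm := by rw [hzm]; exact Real.sqrt_pos.mpr ham
  have hzz : zp * zm = 1 := by
    rw [hzp, hzm, ← Real.sqrt_mul hap.le, hprodam, Real.sqrt_one]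
  -- the bases
  have hPpos : 0 < j₃ / (t₀ * yp * zp) := by positivity
  have hMpos : 0 < j₃ / (t₀ * ym * zm) := by positivity
  have hb1ppos : 0 < b1p := by rw [hb1p]; positivity
  have hb1mpos : 0 < b1m := by rw [hb1m]; positivity
  have hjt : 0 < j₃ / t₀ := by positivity
  have hgoal : (j₃ / t₀) ^ ((2 : ℝ) / 3) = ((j₃ / t₀) ^ 2) ^ ((1 : ℝ) / 3) := by
    rw [← Real.rpow_natCast (j₃ / t₀) 2, ← Real.rpow_mul hjt.le]
    norm_num
  have hden : (t₀ * yp * zp) * (t₀ * ym * zm) = t₀ ^ 2 := by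
    have h' : (t₀ * yp * zp) * (t₀ * ym * zm) = t₀ ^ 2 * ((yp * ym) * (zp * zm)) := by ring
    rw [h', hyy, hzz]; ring
  have hPM : j₃ / (t₀ * yp * zp) * (j₃ / (t₀ * ym * zm)) = (j₃ / t₀) ^ 2 := by
    rw [div_mul_div_comm, hden, div_pow]; ring_nf
  have hb11 : b1p * b1m = (j₃ / t₀) ^ ((2 : ℝ) / 3) := by
    rw [hb1p, hb1m, ← Real.mul_rpow hPpos.le hMpos.le, hPM, hgoal]
  have hb22 : b2p * b2m = (j₃ / t₀) ^ ((2 : ℝ) / 3) := by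
    rw [hb2p, hb2m, show yp * b1p * (ym * b1m) = (yp * ym) * (b1p * b1m) by ring,
      hyy, one_mul, hb11]
  have hb33 : b3p * b3m = (j₃ / t₀) ^ ((2 : ℝ) / 3) := by
    rw [hb3p, hb3m, show zp * b1p * (zm * b1m) = (zp * zm) * (b1p * b1m) by ring,
      hzz, one_mul, hb11]
  have hcube_p : b1p ^ 3 = j₃ / (t₀ * yp * zp) := by
    rw [hb1p, ← Real.rpow_natCast (_ ^ ((1:ℝ)/3)) 3, ← Real.rpow_mul hPpos.le]
    norm_num
  have hcube_m : b1m ^ 3 = j₃ / (t₀ * ym * zm) := by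
    rw [hb1m, ← Real.rpow_natCast (_ ^ ((1:ℝ)/3)) 3, ← Real.rpow_mul hMpos.le]
    norm_num
  have htriple_p : b1p * b2p * b3p = j₃ / t₀ := by
    rw [hb2p, hb3p, show b1p * (yp * b1p) * (zp * b1p) = yp * zp * b1p ^ 3 by ring,
      hcube_p]
    field_simp
  have htriple_m : b1m * b2m * b3m = j₃ / t₀ := by
    rw [hb2m, hb3m, show b1m * (ym * b1m) * (zm * b1m) = ym * zm * b1m ^ 3 by ring,
      hcube_m]
    field_simp
  exact ⟨hyy, hzz, hb11, hb22, hb33, by rw [htriple_p], by rw [htriple_m]⟩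
end

section
/- Let j₁, j₃ be real numbers with j₁ > j₃ > 0, set z± = (j₁ ± √(j₁² − j₃²))/j₃, K = (j₃/2)^{2/3}, and let (b₁±, b₂±, b₃±) with b₁± = b₂± = (j₃/(2z±))^{1/3}, b₃± = z± b₁± be the two solutions of the system b₁(b₂² + b₃²) = j₁, b₂(b₁² + b₃²) = j₁, b₃(b₁² + b₂²) = j₃. Then for each sign, (b₁±b₂±)² + (b₂±b₃±)² + (b₃±b₁±)² = K²(1 + 2z±²)/z±^{4/3}, and the two values are different: K²(1 + 2z₊²)/z₊^{4/3} ≠ K²(1 + 2z₋²)/z₋^{4/3}. -/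
/-!
The numbers `z±` are the two roots of `j₃ z² − 2 j₁ z + j₃ = 0`, so `z₋ = z₊⁻¹` and `z₊ > 1`.
For `b₁ = b₂ = b`, `b₃ = z b` the invariant is `b⁴ (1 + 2 z²)`, and `b⁴ = K² / z^{4/3}`.
Writing `z₊ = t³`, the two values are `K² (1 + 2t⁶)/t⁴` and `K² (t⁶ + 2)/t²`, whose difference
is `−K² (t² − 1)³ (t² + 1) / t⁴ ≠ 0` because `t ≠ 1`.
-/

open Real

lemma rpow_two_thirds_sq {a : ℝ} (ha : 0 ≤ a) :
    (a ^ ((2 : ℝ) / 3)) ^ 2 = a ^ ((4 : ℝ) / 3) := by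
  rw [← rpow_mul_natCast ha]
  norm_num

lemma rpow_one_third_pow_four {a : ℝ} (ha : 0 ≤ a) :
    (a ^ ((1 : ℝ) / 3)) ^ 4 = a ^ ((4 : ℝ) / 3) := by
  rw [← rpow_mul_natCast ha]
  norm_num

lemma pow_three_rpow_four_thirds {t : ℝ} (ht : 0 ≤ t) : (t ^ 3) ^ ((4 : ℝ) / 3) = t ^ 4 := by
  rw [← rpow_natCast_mul ht, ← rpow_natCast]
  norm_num

lemma strength_of_diagonal_solution {j z b : ℝ} (hj : 0 ≤ j) (hz : 0 ≤ z)
    (hb : b = (j / (2 * z)) ^ ((1 : ℝ) / 3)) :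
    (b * b) ^ 2 + (b * (z * b)) ^ 2 + (z * b * b) ^ 2
      = ((j / 2) ^ ((2 : ℝ) / 3)) ^ 2 * (1 + 2 * z ^ 2) / z ^ ((4 : ℝ) / 3) := by
  have hb4 : b ^ 4 = (j / 2) ^ ((4 : ℝ) / 3) / z ^ ((4 : ℝ) / 3) := by
    rw [hb, rpow_one_third_pow_four (by positivity), ← div_div,
      div_rpow (by positivity) hz]
  calc (b * b) ^ 2 + (b * (z * b)) ^ 2 + (z * b * b) ^ 2 = b ^ 4 * (1 + 2 * z ^ 2) := by ring
    _ = _ := by rw [hb4, rpow_two_thirds_sq (by positivity)]; ring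

lemma one_add_two_sq_div_rpow_ne_inv {z : ℝ} (hz : 0 < z) (hz1 : z ≠ 1) :
    (1 + 2 * z ^ 2) / z ^ ((4 : ℝ) / 3) ≠ (1 + 2 * z⁻¹ ^ 2) / z⁻¹ ^ ((4 : ℝ) / 3) := by
  obtain ⟨t, ht, rfl⟩ : ∃ t : ℝ, 0 < t ∧ t ^ 3 = z :=
    ⟨z ^ ((1 : ℝ) / 3), by positivity, by rw [← rpow_mul_natCast hz.le]; norm_num⟩
  have ht1 : t ^ 2 ≠ 1 := by
    intro h
    rw [pow_eq_one_iff_of_nonneg ht.le two_ne_zero] at h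
    simp [h] at hz1
  rw [inv_rpow (by positivity), pow_three_rpow_four_thirds ht.le]
  field_simp
  rw [ne_eq, div_eq_div_iff (by positivity) (by positivity)]
  intro h
  have hfactor : t ^ 2 * ((t ^ 2 - 1) ^ 3 * (t ^ 2 + 1)) ≠ 0 :=
    mul_ne_zero (by positivity) (mul_ne_zero (pow_ne_zero 3 (sub_ne_zero.2 ht1)) (by positivity))
  exact hfactor (by linear_combination -h)

lemma quadratic_roots_mul_eq_one {j₁ j₃ : ℝ} (h₃ : j₃ ≠ 0) (h : j₃ ^ 2 ≤ j₁ ^ 2) :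
    (j₁ + √(j₁ ^ 2 - j₃ ^ 2)) / j₃ * ((j₁ - √(j₁ ^ 2 - j₃ ^ 2)) / j₃) = 1 := by
  field_simp
  have := sq_sqrt (sub_nonneg.2 h)
  linear_combination -this

/-- Case 1 of Lemma 6 of the paper: for `j₁ = j₂ > j₃ > 0`, with
`z± = (j₁ ± √(j₁² − j₃²))/j₃`, `K = (j₃/2)^{2/3}`, and the two solutions
`b₁± = b₂± = (j₃/(2z±))^{1/3}`, `b₃± = z±b₁±` of the diagonal system, the
strength invariant satisfies
`(b₁±b₂±)² + (b₂±b₃±)² + (b₃±b₁±)² = K²(1 + 2z±²)/z±^{4/3}`, and the two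
values (for the two signs) are different. -/
theorem strength_invariant_case_a (j₁ j₃ : ℝ)
    (h₁₃ : j₁ > j₃) (h₃ : j₃ > 0)
    (zp zm K b1p b1m b2p b2m b3p b3m : ℝ)
    (hzp : zp = (j₁ + Real.sqrt (j₁ ^ 2 - j₃ ^ 2)) / j₃)
    (hzm : zm = (j₁ - Real.sqrt (j₁ ^ 2 - j₃ ^ 2)) / j₃)
    (hK : K = (j₃ / 2) ^ ((2 : ℝ) / 3))
    (hb1p : b1p = (j₃ / (2 * zp)) ^ ((1 : ℝ) / 3))
    (hb1m : b1m = (j₃ / (2 * zm)) ^ ((1 : ℝ) / 3))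
    (hb2p : b2p = b1p) (hb2m : b2m = b1m)
    (hb3p : b3p = zp * b1p) (hb3m : b3m = zm * b1m) :
    (b1p * b2p) ^ 2 + (b2p * b3p) ^ 2 + (b3p * b1p) ^ 2
      = K ^ 2 * (1 + 2 * zp ^ 2) / zp ^ ((4 : ℝ) / 3) ∧
    (b1m * b2m) ^ 2 + (b2m * b3m) ^ 2 + (b3m * b1m) ^ 2
      = K ^ 2 * (1 + 2 * zm ^ 2) / zm ^ ((4 : ℝ) / 3) ∧
    K ^ 2 * (1 + 2 * zp ^ 2) / zp ^ ((4 : ℝ) / 3)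
      ≠ K ^ 2 * (1 + 2 * zm ^ 2) / zm ^ ((4 : ℝ) / 3) := by
  have hzp_gt_one : 1 < zp := by
    rw [hzp, one_lt_div h₃]
    linarith [sqrt_nonneg (j₁ ^ 2 - j₃ ^ 2)]
  have hzm_inv : zm = zp⁻¹ := by
    refine eq_inv_of_mul_eq_one_right ?_
    rw [hzp, hzm]
    exact quadratic_roots_mul_eq_one h₃.ne' (pow_le_pow_left₀ h₃.le h₁₃.le 2)
  have hzp_pos : 0 < zp := by linarith
  have hzm_pos : 0 < zm := by rw [hzm_inv]; positivity
  subst hK hb2p hb2m hb3p hb3m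
  refine ⟨strength_of_diagonal_solution h₃.le hzp_pos.le hb1p,
    strength_of_diagonal_solution h₃.le hzm_pos.le hb1m, ?_⟩
  rw [hzm_inv, mul_div_assoc, mul_div_assoc]
  exact (mul_right_injective₀ (by positivity)).ne
    (one_add_two_sq_div_rpow_ne_inv hzp_pos hzp_gt_one.ne')
end

section
/- Let j₁, j₃ be real numbers with j₃ > j₁ > 0, set s = (j₃ + √(j₃² + 8j₁²))/(2j₁), K = (j₁/s)^{2/3}, w± = (s ± √(s² − 4))/2, b₃ = (j₁/s)^{1/3}, and let (b₁±, b₂±, b₃±) = (b₃/w±, w± b₃, b₃) be the two solutions of the system b₁(b₂² + b₃²) = j₁, b₂(b₁² + b₃²) = j₁, b₃(b₁² + b₂²) = j₃. Then for both signs the value of (b₁±b₂±)² + (b₂±b₃±)² + (b₃±b₁±)² is the same and equals K²(s² − 1). -/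
lemma strength_aux (w v s b : ℝ) (h1 : w * v = 1) (h2 : w + v = s) :
    (b * v * (w * b)) ^ 2 + (w * b * b) ^ 2 + (b * (b * v)) ^ 2
      = (b ^ 2) ^ 2 * (s ^ 2 - 1) := by
  linear_combination b ^ 4 * (w * v - 1) * h1 + b ^ 4 * (w + v + s) * h2

/-- Case 2 of Lemma 6 of the paper: for `j₃ > j₁ = j₂ > 0`, with
`s = (j₃ + √(j₃² + 8j₁²))/(2j₁)`, `K = (j₁/s)^{2/3}`, `w± = (s ± √(s² − 4))/2`,
`b₃ = (j₁/s)^{1/3}`, and the two solutions `(b₃/w±, w±b₃, b₃)` of the diagonal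
system, the strength invariant takes the same value for both signs:
`(b₁±b₂±)² + (b₂±b₃±)² + (b₃±b₁±)² = K²(s² − 1)`. -/
theorem strength_invariant_case_b (j₁ j₃ : ℝ)
    (h₃₁ : j₃ > j₁) (h₁ : j₁ > 0)
    (s K wp wm b₃ b1p b1m b2p b2m b3p b3m : ℝ)
    (hs : s = (j₃ + Real.sqrt (j₃ ^ 2 + 8 * j₁ ^ 2)) / (2 * j₁))
    (hK : K = (j₁ / s) ^ ((2 : ℝ) / 3))
    (hwp : wp = (s + Real.sqrt (s ^ 2 - 4)) / 2)
    (hwm : wm = (s - Real.sqrt (s ^ 2 - 4)) / 2)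
    (hb3 : b₃ = (j₁ / s) ^ ((1 : ℝ) / 3))
    (hb1p : b1p = b₃ / wp) (hb1m : b1m = b₃ / wm)
    (hb2p : b2p = wp * b₃) (hb2m : b2m = wm * b₃)
    (hb3p : b3p = b₃) (hb3m : b3m = b₃) :
    (b1p * b2p) ^ 2 + (b2p * b3p) ^ 2 + (b3p * b1p) ^ 2
      = K ^ 2 * (s ^ 2 - 1) ∧
    (b1m * b2m) ^ 2 + (b2m * b3m) ^ 2 + (b3m * b1m) ^ 2
      = K ^ 2 * (s ^ 2 - 1) := by
  have hsqrt : Real.sqrt (j₃ ^ 2 + 8 * j₁ ^ 2) > 3 * j₁ := by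
    rw [show (3 : ℝ) * j₁ = Real.sqrt ((3*j₁)^2) by
      rw [Real.sqrt_sq (by positivity)]]
    apply Real.sqrt_lt_sqrt (by positivity)
    nlinarith
  have hs2 : s > 2 := by
    rw [hs, gt_iff_lt, lt_div_iff₀ (by positivity)]
    nlinarith
  have hs0 : s > 0 := by linarith
  have hjs : j₁ / s > 0 := by positivity
  -- sqrt(s^2-4)
  have ht2 : Real.sqrt (s ^ 2 - 4) ^ 2 = s ^ 2 - 4 :=
    Real.sq_sqrt (by nlinarith)
  have hts : Real.sqrt (s ^ 2 - 4) < s := by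
    nlinarith [Real.sqrt_nonneg (s ^ 2 - 4)]
  have htnn : Real.sqrt (s ^ 2 - 4) ≥ 0 := Real.sqrt_nonneg _
  have hwp0 : wp > 0 := by rw [hwp]; positivity
  have hwm0 : wm > 0 := by rw [hwm]; linarith
  have hsum : wp + wm = s := by rw [hwp, hwm]; ring
  have hprod : wp * wm = 1 := by rw [hwp, hwm]; linear_combination (-1/4) * ht2
  have hKb : K = b₃ ^ 2 := by
    rw [hK, hb3, ← Real.rpow_natCast ((j₁/s) ^ ((1:ℝ)/3)) 2,
      ← Real.rpow_mul hjs.le]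
    norm_num
  have hdp : b₃ / wp = b₃ * wm := by
    field_simp
    linear_combination -b₃ * hprod
  have hdm : b₃ / wm = b₃ * wp := by
    field_simp
    linear_combination -b₃ * hprod
  constructor
  · rw [hb1p, hb2p, hb3p, hKb, hdp]
    exact strength_aux wp wm s b₃ hprod hsum
  · rw [hb1m, hb2m, hb3m, hKb, hdm]
    exact strength_aux wm wp s b₃ (by linear_combination hprod) (by linarith)
end

section
/- Let j₁, j₂, j₃ be pairwise distinct positive real numbers, let t₀ > 2 be a real root of j₁j₂t³ − (j₁² + j₂² + j₃²)t² + 4j₃² = 0, and set y± = (t₀ ± √(t₀² − 4))/2, z± = √(y±(j₁ − j₂y±)/(j₂ − j₁y±)), b₁± = (j₃/(t₀ y± z±))^{1/3}, b₂± = y± b₁±, b₃± = z± b₁±, K = (j₃/t₀)^{2/3}. Then for each sign, (b₁±b₂±)² + (b₂±b₃±)² + (b₃±b₁±)² = K²(y±² + z±² + y±²z±²)/(y±z±)^{4/3}, and the two values are different: (b₁₊b₂₊)² + (b₂₊b₃₊)² + (b₃₊b₁₊)² ≠ (b₁₋b₂₋)² + (b₂₋b₃₋)² + (b₃₋b₁₋)².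 -/
/-!
The roots `y₊, y₋` of `y² - t₀ y + 1` satisfy `y₋ = y₊⁻¹`, and the radicand defining `z` is
inverted by `y ↦ y⁻¹`, so `(y₋, z₋) = (y₊⁻¹, z₊⁻¹)`. Writing `(y, z) = (y₊, z₊)` and `q³ = y z`,
equality of the two strength values becomes `(q² - 1)(y² - q²)(y² - q⁴) = 0`, i.e. `y z = 1`,
`z = y²` or `y = z²`. As `b₊ = b₁₊ (1, y, z)` solves the system, each of these shapes forces two
of the `jᵢ` to coincide.
-/

lemma add_sqrt_div_two_sq_add_one {t : ℝ} (ht : 2 ≤ t) :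
    ((t + √(t ^ 2 - 4)) / 2) ^ 2 + 1 = t * ((t + √(t ^ 2 - 4)) / 2) := by
  have hs := Real.sq_sqrt (show (0 : ℝ) ≤ t ^ 2 - 4 by nlinarith)
  linear_combination hs / 4

lemma sub_sqrt_div_two_eq_inv {t : ℝ} (ht : 2 ≤ t) :
    (t - √(t ^ 2 - 4)) / 2 = ((t + √(t ^ 2 - 4)) / 2)⁻¹ := by
  have hs := Real.sq_sqrt (show (0 : ℝ) ≤ t ^ 2 - 4 by nlinarith)
  refine (inv_eq_of_mul_eq_one_right ?_).symm
  linear_combination -hs / 4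

lemma radicand_inv (j₁ j₂ y : ℝ) :
    y⁻¹ * (j₁ - j₂ * y⁻¹) / (j₂ - j₁ * y⁻¹) = (y * (j₁ - j₂ * y) / (j₂ - j₁ * y))⁻¹ := by
  rcases eq_or_ne y 0 with rfl | hy
  · simp
  rw [inv_div, ← neg_div_neg_eq, ← mul_div_mul_right _ _ (pow_ne_zero 2 hy)]
  congr 1 <;> field_simp <;> ring

section ReducedSystem

variable {j₁ j₂ j₃ t y z : ℝ}

lemma resolvent_pos (ht : 2 < t) (hj₃ : j₃ ≠ 0)
    (hroot : j₁ * j₂ * t ^ 3 - (j₁ ^ 2 + j₂ ^ 2 + j₃ ^ 2) * t ^ 2 + 4 * j₃ ^ 2 = 0) :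
    0 < j₁ * j₂ * t - j₁ ^ 2 - j₂ ^ 2 := by
  have h : (j₁ * j₂ * t - j₁ ^ 2 - j₂ ^ 2) * t ^ 2 = j₃ ^ 2 * (t ^ 2 - 4) := by
    linear_combination hroot
  refine lt_of_mul_lt_mul_right ?_ (sq_nonneg t)
  rw [zero_mul, h]
  have : 0 < t ^ 2 - 4 := by nlinarith
  positivity

lemma mul_sub_mul_eq_sq_mul (hy : y ^ 2 + 1 = t * y) :
    y * (j₁ - j₂ * y) * (j₂ - j₁ * y) = y ^ 2 * (j₁ * j₂ * t - j₁ ^ 2 - j₂ ^ 2) := by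
  linear_combination j₁ * j₂ * y * hy

lemma sub_mul_ne_zero (hy : y ^ 2 + 1 = t * y) (hM : 0 < j₁ * j₂ * t - j₁ ^ 2 - j₂ ^ 2) :
    j₂ - j₁ * y ≠ 0 := by
  intro h
  have : j₁ * j₂ * t - j₁ ^ 2 - j₂ ^ 2 = 0 := by
    linear_combination (j₁ * t - j₁ * y - j₂) * h - j₁ ^ 2 * hy
  exact hM.ne' this

lemma radicand_pos (hy₀ : y ≠ 0) (hy : y ^ 2 + 1 = t * y)
    (hM : 0 < j₁ * j₂ * t - j₁ ^ 2 - j₂ ^ 2) : 0 < y * (j₁ - j₂ * y) / (j₂ - j₁ * y) := by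
  have hd := sub_mul_ne_zero hy hM
  rw [← mul_div_mul_right _ _ hd, mul_sub_mul_eq_sq_mul hy]
  exact div_pos (mul_pos (sq_pos_of_ne_zero hy₀) hM) (mul_self_pos.2 hd)

/-- For `b = b₁ (1, y, z)` with `b₁³ = j₃ / (t y z)`, the third equation of the system is
`y² + 1 = t y` and the other two are the conclusions. Both sides of the first are positive, so
it is enough to compare their squares. -/
lemma reduced_system (h₂ : 0 < j₂) (h₃ : 0 < j₃) (ht : 0 < t) (hz : 0 < z)
    (hroot : j₁ * j₂ * t ^ 3 - (j₁ ^ 2 + j₂ ^ 2 + j₃ ^ 2) * t ^ 2 + 4 * j₃ ^ 2 = 0)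
    (hy : y ^ 2 + 1 = t * y) (hd : j₂ - j₁ * y ≠ 0)
    (hz2 : z ^ 2 * (j₂ - j₁ * y) = y * (j₁ - j₂ * y)) :
    j₃ * (1 + z ^ 2) = j₂ * t * z ∧ j₃ * (y ^ 2 + z ^ 2) = j₁ * t * y * z := by
  have h₁d : (1 + z ^ 2) * (j₂ - j₁ * y) = j₂ * (1 - y ^ 2) := by linear_combination hz2
  have hsq : (j₃ * (1 + z ^ 2)) ^ 2 = (j₂ * t * z) ^ 2 := by
    refine mul_right_cancel₀ (pow_ne_zero 2 hd) ?_
    calc (j₃ * (1 + z ^ 2)) ^ 2 * (j₂ - j₁ * y) ^ 2 = (j₃ * j₂ * (1 - y ^ 2)) ^ 2 := by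
          rw [mul_assoc j₃, ← h₁d]; ring
      _ = j₂ ^ 2 * y ^ 2 * (j₃ ^ 2 * (t ^ 2 - 4)) := by
          linear_combination (j₃ * j₂) ^ 2 * (y ^ 2 + 1 + t * y) * hy
      _ = j₂ ^ 2 * t ^ 2 * (y ^ 2 * (j₁ * j₂ * t - j₁ ^ 2 - j₂ ^ 2)) := by
          linear_combination -(j₂ ^ 2 * y ^ 2) * hroot
      _ = (j₂ * t * z) ^ 2 * (j₂ - j₁ * y) ^ 2 := by
          rw [← mul_sub_mul_eq_sq_mul hy, ← hz2]; ring
  have hj₂ : j₃ * (1 + z ^ 2) = j₂ * t * z :=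
    (pow_left_inj₀ (by positivity) (by positivity) two_ne_zero).1 hsq
  have hsign : j₃ * (1 - y ^ 2) = t * z * (j₂ - j₁ * y) :=
    mul_left_cancel₀ h₂.ne' (by linear_combination (j₂ - j₁ * y) * hj₂ - j₃ * h₁d)
  refine ⟨hj₂, mul_right_cancel₀ hd ?_⟩
  linear_combination j₃ * hz2 + j₁ * y * hsign

end ReducedSystem

lemma sum_sq_mul_eq {j t y z b : ℝ} (hj : 0 ≤ j) (ht : 0 ≤ t) (hy : 0 ≤ y) (hz : 0 ≤ z)
    (hb : b = (j / (t * y * z)) ^ ((1 : ℝ) / 3)) :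
    (b * (y * b)) ^ 2 + (y * b * (z * b)) ^ 2 + (z * b * b) ^ 2
      = ((j / t) ^ ((2 : ℝ) / 3)) ^ 2 * (y ^ 2 + z ^ 2 + y ^ 2 * z ^ 2)
        / (y * z) ^ ((4 : ℝ) / 3) := by
  have hjt : 0 ≤ j / t := div_nonneg hj ht
  have hb4 : b ^ 4 = (j / t) ^ ((4 : ℝ) / 3) / (y * z) ^ ((4 : ℝ) / 3) := by
    rw [hb, mul_assoc, ← div_div, ← Real.rpow_natCast, ← Real.rpow_mul (by positivity),
      Real.div_rpow hjt (by positivity)]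
    norm_num
  have hK : ((j / t) ^ ((2 : ℝ) / 3)) ^ 2 = (j / t) ^ ((4 : ℝ) / 3) := by
    rw [← Real.rpow_natCast, ← Real.rpow_mul hjt]; norm_num
  calc (b * (y * b)) ^ 2 + (y * b * (z * b)) ^ 2 + (z * b * b) ^ 2
      = b ^ 4 * (y ^ 2 + z ^ 2 + y ^ 2 * z ^ 2) := by ring
    _ = _ := by rw [hb4, hK]; ring

lemma eq_or_eq_or_eq_of_mul_eq_one_or_eq_sq {j₁ j₂ j₃ t y z : ℝ}
    (hy : 0 < y) (hz : 0 < z) (ht : 0 < t) (hyt : y ^ 2 + 1 = t * y)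
    (hj₂ : j₃ * (1 + z ^ 2) = j₂ * t * z)
    (hj₁ : j₃ * (y ^ 2 + z ^ 2) = j₁ * t * y * z) :
    y * z = 1 ∨ z = y ^ 2 ∨ y = z ^ 2 → j₂ = j₃ ∨ j₁ = j₃ ∨ j₁ = j₂ := by
  rintro (h | rfl | rfl)
  · refine Or.inl (mul_right_cancel₀ (by positivity : y ^ 2 + 1 ≠ 0) ?_).symm
    linear_combination y ^ 2 * hj₂ - j₃ * (1 + y * z) * h + j₂ * t * y * h - j₂ * hyt
  · refine Or.inr (Or.inl (mul_right_cancel₀ (by positivity : y ^ 2 * (y ^ 2 + 1) ≠ 0) ?_).symm)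
    linear_combination hj₁ - j₁ * y ^ 2 * hyt
  · refine Or.inr (Or.inr (mul_right_cancel₀ (by positivity : t * z ^ 3 ≠ 0) ?_))
    linear_combination -hj₁ + z ^ 2 * hj₂

lemma mul_eq_one_or_eq_sq_or_eq_sq_of_cube {y z q : ℝ} (hy : 0 < y) (hq : 0 < q)
    (hq3 : q ^ 3 = y * z) (h : y ^ 2 + z ^ 2 + q ^ 6 = (1 + y ^ 2 + z ^ 2) * q ^ 2) :
    y * z = 1 ∨ z = y ^ 2 ∨ y = z ^ 2 := by
  have : (q ^ 2 - 1) * (y ^ 2 - q ^ 2) * (y ^ 2 - q ^ 4) = 0 := by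
    linear_combination -y ^ 2 * h + (q ^ 2 - 1) * (q ^ 3 + y * z) * hq3
  rcases mul_eq_zero.1 this with h' | hy4
  rcases mul_eq_zero.1 h' with hq2 | hy2
  · have hq1 : q = 1 := (pow_eq_one_iff_of_nonneg hq.le two_ne_zero).1 (sub_eq_zero.1 hq2)
    exact Or.inl (by rw [← hq3, hq1, one_pow])
  · obtain rfl : y = q := (pow_left_inj₀ hy.le hq.le two_ne_zero).1 (sub_eq_zero.1 hy2)
    exact Or.inr (Or.inl (mul_left_cancel₀ hy.ne' (by linear_combination hq3)).symm)
  · obtain rfl : y = q ^ 2 :=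
      (pow_left_inj₀ hy.le (by positivity) two_ne_zero).1 (by linear_combination hy4)
    obtain rfl : z = q := mul_left_cancel₀ (pow_ne_zero 2 hq.ne') (by linear_combination -hq3)
    exact Or.inr (Or.inr rfl)

lemma mul_eq_one_or_eq_sq_or_eq_sq_of_strength_eq {y z : ℝ} (hy : 0 < y) (hz : 0 < z)
    (h : (y ^ 2 + z ^ 2 + y ^ 2 * z ^ 2) / (y * z) ^ ((4 : ℝ) / 3)
      = (y⁻¹ ^ 2 + z⁻¹ ^ 2 + y⁻¹ ^ 2 * z⁻¹ ^ 2) / (y⁻¹ * z⁻¹) ^ ((4 : ℝ) / 3)) :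
    y * z = 1 ∨ z = y ^ 2 ∨ y = z ^ 2 := by
  have hyz : 0 ≤ y * z := by positivity
  set q := (y * z) ^ ((1 : ℝ) / 3)
  have hq : 0 < q := by positivity
  have hq3 : q ^ 3 = y * z := by
    rw [← Real.rpow_natCast, ← Real.rpow_mul hyz]; norm_num
  have hq4 : (y * z) ^ ((4 : ℝ) / 3) = q ^ 4 := by
    rw [← Real.rpow_natCast, ← Real.rpow_mul hyz]; norm_num
  rw [← mul_inv, Real.inv_rpow hyz, hq4] at h
  refine mul_eq_one_or_eq_sq_or_eq_sq_of_cube hy hq hq3 ?_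
  field_simp at h
  refine mul_left_cancel₀ (pow_ne_zero 6 hq.ne') ?_
  linear_combination h + (q ^ 3 + y * z) * (y ^ 2 + z ^ 2 + q ^ 6 + y ^ 2 * z ^ 2) * hq3

theorem strength_invariant_case_c_general (j₁ j₂ j₃ : ℝ)
    (h₂ : 0 < j₂) (h₃ : 0 < j₃)
    (h₁₂ : j₁ ≠ j₂) (h₁₃ : j₁ ≠ j₃) (h₂₃ : j₂ ≠ j₃)
    (t₀ : ℝ) (ht₀ : 2 < t₀)
    (hroot : j₁ * j₂ * t₀ ^ 3 - (j₁ ^ 2 + j₂ ^ 2 + j₃ ^ 2) * t₀ ^ 2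
      + 4 * j₃ ^ 2 = 0)
    (yp ym zp zm b1p b1m b2p b2m b3p b3m K : ℝ)
    (hyp : yp = (t₀ + Real.sqrt (t₀ ^ 2 - 4)) / 2)
    (hym : ym = (t₀ - Real.sqrt (t₀ ^ 2 - 4)) / 2)
    (hzp : zp = Real.sqrt (yp * (j₁ - j₂ * yp) / (j₂ - j₁ * yp)))
    (hzm : zm = Real.sqrt (ym * (j₁ - j₂ * ym) / (j₂ - j₁ * ym)))
    (hb1p : b1p = (j₃ / (t₀ * yp * zp)) ^ ((1 : ℝ) / 3))
    (hb1m : b1m = (j₃ / (t₀ * ym * zm)) ^ ((1 : ℝ) / 3))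
    (hb2p : b2p = yp * b1p) (hb2m : b2m = ym * b1m)
    (hb3p : b3p = zp * b1p) (hb3m : b3m = zm * b1m)
    (hK : K = (j₃ / t₀) ^ ((2 : ℝ) / 3)) :
    (b1p * b2p) ^ 2 + (b2p * b3p) ^ 2 + (b3p * b1p) ^ 2
      = K ^ 2 * (yp ^ 2 + zp ^ 2 + yp ^ 2 * zp ^ 2) / (yp * zp) ^ ((4 : ℝ) / 3) ∧
    (b1m * b2m) ^ 2 + (b2m * b3m) ^ 2 + (b3m * b1m) ^ 2
      = K ^ 2 * (ym ^ 2 + zm ^ 2 + ym ^ 2 * zm ^ 2) / (ym * zm) ^ ((4 : ℝ) / 3) ∧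
    (b1p * b2p) ^ 2 + (b2p * b3p) ^ 2 + (b3p * b1p) ^ 2
      ≠ (b1m * b2m) ^ 2 + (b2m * b3m) ^ 2 + (b3m * b1m) ^ 2 := by
  subst hb2p hb2m hb3p hb3m hK
  have ht : 0 < t₀ := by linarith
  have hyp0 : 0 < yp := by rw [hyp]; positivity
  have hy : yp ^ 2 + 1 = t₀ * yp := hyp ▸ add_sqrt_div_two_sq_add_one ht₀.le
  have hym' : ym = yp⁻¹ := by rw [hym, hyp, sub_sqrt_div_two_eq_inv ht₀.le]
  have hM := resolvent_pos ht₀ h₃.ne' hroot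
  have hR := radicand_pos hyp0.ne' hy hM
  have hzp0 : 0 < zp := hzp ▸ Real.sqrt_pos.2 hR
  have hzm' : zm = zp⁻¹ := by rw [hzm, hym', radicand_inv, Real.sqrt_inv, hzp]
  have hz2 : zp ^ 2 * (j₂ - j₁ * yp) = yp * (j₁ - j₂ * yp) := by
    rw [hzp, Real.sq_sqrt hR.le, div_mul_cancel₀ _ (sub_mul_ne_zero hy hM)]
  obtain ⟨hj₂, hj₁⟩ := reduced_system h₂ h₃ ht hzp0 hroot hy (sub_mul_ne_zero hy hM) hz2
  have hp := sum_sq_mul_eq h₃.le ht.le hyp0.le hzp0.le hb1p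
  have hm := sum_sq_mul_eq h₃.le ht.le (hym' ▸ inv_nonneg.2 hyp0.le)
    (hzm' ▸ inv_nonneg.2 hzp0.le) hb1m
  refine ⟨hp, hm, fun h => ?_⟩
  rw [hp, hm, hym', hzm', mul_div_assoc, mul_div_assoc] at h
  have hshape := mul_eq_one_or_eq_sq_or_eq_sq_of_strength_eq hyp0 hzp0
    (mul_left_cancel₀ (by positivity) h)
  rcases eq_or_eq_or_eq_of_mul_eq_one_or_eq_sq hyp0 hzp0 ht hy hj₂ hj₁ hshape with h | h | h
  exacts [h₂₃ h, h₁₃ h, h₁₂ h]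

/-- Case 3 of Lemma 6 of the paper: for pairwise distinct positive
`j₁, j₂, j₃`, with `t₀ > 2` a root of the resolvent cubic,
`y± = (t₀ ± √(t₀² − 4))/2`, `z± = √(y±(j₁ − j₂y±)/(j₂ − j₁y±))`,
`b₁± = (j₃/(t₀y±z±))^{1/3}`, `b₂± = y±b₁±`, `b₃± = z±b₁±`, and
`K = (j₃/t₀)^{2/3}`, the strength invariant satisfies
`(b₁±b₂±)² + (b₂±b₃±)² + (b₃±b₁±)² = K²(y±² + z±² + y±²z±²)/(y±z±)^{4/3}`,
and the values for the two signs are different. -/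
theorem strength_invariant_case_c (j₁ j₂ j₃ : ℝ)
    (h₁ : 0 < j₁) (h₂ : 0 < j₂) (h₃ : 0 < j₃)
    (h₁₂ : j₁ ≠ j₂) (h₁₃ : j₁ ≠ j₃) (h₂₃ : j₂ ≠ j₃)
    (t₀ : ℝ) (ht₀ : 2 < t₀)
    (hroot : j₁ * j₂ * t₀ ^ 3 - (j₁ ^ 2 + j₂ ^ 2 + j₃ ^ 2) * t₀ ^ 2
      + 4 * j₃ ^ 2 = 0)
    (yp ym zp zm b1p b1m b2p b2m b3p b3m K : ℝ)
    (hyp : yp = (t₀ + Real.sqrt (t₀ ^ 2 - 4)) / 2)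
    (hym : ym = (t₀ - Real.sqrt (t₀ ^ 2 - 4)) / 2)
    (hzp : zp = Real.sqrt (yp * (j₁ - j₂ * yp) / (j₂ - j₁ * yp)))
    (hzm : zm = Real.sqrt (ym * (j₁ - j₂ * ym) / (j₂ - j₁ * ym)))
    (hb1p : b1p = (j₃ / (t₀ * yp * zp)) ^ ((1 : ℝ) / 3))
    (hb1m : b1m = (j₃ / (t₀ * ym * zm)) ^ ((1 : ℝ) / 3))
    (hb2p : b2p = yp * b1p) (hb2m : b2m = ym * b1m)
    (hb3p : b3p = zp * b1p) (hb3m : b3m = zm * b1m)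
    (hK : K = (j₃ / t₀) ^ ((2 : ℝ) / 3)) :
    (b1p * b2p) ^ 2 + (b2p * b3p) ^ 2 + (b3p * b1p) ^ 2
      = K ^ 2 * (yp ^ 2 + zp ^ 2 + yp ^ 2 * zp ^ 2) / (yp * zp) ^ ((4 : ℝ) / 3) ∧
    (b1m * b2m) ^ 2 + (b2m * b3m) ^ 2 + (b3m * b1m) ^ 2
      = K ^ 2 * (ym ^ 2 + zm ^ 2 + ym ^ 2 * zm ^ 2) / (ym * zm) ^ ((4 : ℝ) / 3) ∧
    (b1p * b2p) ^ 2 + (b2p * b3p) ^ 2 + (b3p * b1p) ^ 2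
      ≠ (b1m * b2m) ^ 2 + (b2m * b3m) ^ 2 + (b3m * b1m) ^ 2 :=
  strength_invariant_case_c_general j₁ j₂ j₃ h₂ h₃ h₁₂ h₁₃ h₂₃ t₀ ht₀ hroot yp ym zp zm b1p b1m b2p
    b2m b3p b3m K hyp hym hzp hzm hb1p hb1m hb2p hb2m hb3p hb3m hK
end
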